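/- arXiv:2011.00173 — 16 statements merged into one kernel-verified Lean document; each statement's English description precedes it below -/
import Mathlib

section
/- Let K be a field, let g, f ∈ K⟦X⟧ with constant term of g nonzero, constant term of f zero and [X^1]f ≠ 0, and let p ≥ 1, r ≥ 0 be integers. Let Φ ∈ K⟦X⟧ satisfy Φ(0) = 0, [X^1]Φ ≠ 0 and Φ^p = X·(f∘Φ)^{p−1}. Then there exists h ∈ K⟦X⟧ such that X·Φ'·(g∘Φ)·(f∘Φ)^r = h·Φ^{r+1}, and for all integers n, k ≥ 0 one has [X^n](h·Φ^k) = [X^{pn+r}](X^k · g · f^{(p−1)n+r}). (Equivalently, the vertical one-p-th array with entries d_{pn+r−k,(p−1)n+r} of the Riordan array (g,f) is the Riordan array (XΦ'·g(Φ)·f(Φ)^r/Φ^{r+1}, Φ).) -/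
open PowerSeries Finset

/-- Composition `F ∘ Φ` of formal power series, intended for `Φ` with zero
constant term (then `Φ ^ j` has order `≥ j`, so the sum below captures all
contributions to the `n`-th coefficient). -/
noncomputable def PowerSeries.comp {K : Type*} [CommRing K] (F Φ : K⟦X⟧) : K⟦X⟧ :=
  PowerSeries.mk fun n => ∑ j ∈ Finset.range (n + 1), (PowerSeries.coeff j F) * PowerSeries.coeff n (Φ ^ j)

section Aux

variable {R : Type*} [CommRing R]

lemma coeff_Xmul_pow_eq_zero {u : R⟦X⟧} {i j : ℕ} (h : i < j) :
    PowerSeries.coeff i ((X * u) ^ j) = 0 := by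
  rw [mul_pow, coeff_X_pow_mul', if_neg (by omega)]

lemma coeff_mul_congr {A A' B B' : R⟦X⟧} {m : ℕ}
    (hA : ∀ i ≤ m, coeff i A = coeff i A')
    (hB : ∀ i ≤ m, coeff i B = coeff i B') :
    coeff m (A * B) = coeff m (A' * B') := by
  rw [PowerSeries.coeff_mul, PowerSeries.coeff_mul]
  refine Finset.sum_congr rfl fun q hq => ?_
  rw [Finset.HasAntidiagonal.mem_antidiagonal] at hq
  rw [hA q.1 (by omega), hB q.2 (by omega)]

lemma coeff_pow_congr {a b : R⟦X⟧} {m : ℕ}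
    (h : ∀ i ≤ m, coeff i a = coeff i b) (t : ℕ) :
    ∀ i ≤ m, coeff i (a ^ t) = coeff i (b ^ t) := by
  induction t with
  | zero => intro i _; rfl
  | succ t ih =>
      intro i hi
      rw [pow_succ, pow_succ]
      exact coeff_mul_congr (fun i' hi' => ih i' (le_trans hi' hi))
        (fun i' hi' => h i' (le_trans hi' hi))

lemma coeff_eval₂ (u : R⟦X⟧) (P : Polynomial R) (m : ℕ) :
    coeff m (P.eval₂ C (X * u)) =
      ∑ j ∈ Finset.range (m + 1), P.coeff j * coeff m ((X * u) ^ j) := by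
  rw [Polynomial.eval₂_eq_sum_range' C
    (by omega : P.natDegree < max (P.natDegree + 1) (m + 1)) (X * u)]
  rw [map_sum]
  rw [← Finset.sum_subset (Finset.range_subset_range.2 (le_max_right (P.natDegree + 1) (m + 1)))
    (fun x _ hx => by
      rw [coeff_C_mul, coeff_Xmul_pow_eq_zero (by simpa using hx), mul_zero])]
  exact Finset.sum_congr rfl fun j _ => by rw [coeff_C_mul]

lemma coeff_comp (F u : R⟦X⟧) (n : ℕ) :
    coeff n (F.comp (X * u)) =
      ∑ j ∈ Finset.range (n + 1), coeff j F * coeff n ((X * u) ^ j) := by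
  simp [PowerSeries.comp]

lemma coeff_comp_eq_eval₂ (F u : R⟦X⟧) {m i : ℕ} (hi : i ≤ m) :
    coeff i (F.comp (X * u)) = coeff i ((trunc (m + 1) F).eval₂ C (X * u)) := by
  rw [coeff_comp, coeff_eval₂]
  refine Finset.sum_congr rfl fun j hj => ?_
  rw [Finset.mem_range] at hj
  rw [coeff_trunc, if_pos (by omega)]

lemma PScomp_one (u : R⟦X⟧) : (1 : R⟦X⟧).comp (X * u) = 1 := by
  ext n
  rw [coeff_comp]
  rw [Finset.sum_eq_single 0]
  · simp
  · intro j _ hj; rw [PowerSeries.coeff_one, if_neg hj, zero_mul]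
  · intro h; simp at h

lemma PScomp_mul (F G u : R⟦X⟧) :
    (F * G).comp (X * u) = F.comp (X * u) * G.comp (X * u) := by
  ext m
  have h1 : coeff m (F.comp (X*u) * G.comp (X*u)) =
      coeff m ((trunc (m+1) F).eval₂ C (X*u) * (trunc (m+1) G).eval₂ C (X*u)) :=
    coeff_mul_congr (fun i hi => coeff_comp_eq_eval₂ F u hi) (fun i hi => coeff_comp_eq_eval₂ G u hi)
  rw [h1, ← Polynomial.eval₂_mul, coeff_comp_eq_eval₂ (F*G) u (le_refl m),
    coeff_eval₂, coeff_eval₂]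
  refine Finset.sum_congr rfl fun j hj => ?_
  rw [Finset.mem_range] at hj
  congr 1
  rw [coeff_trunc, if_pos (by omega), Polynomial.coeff_mul, PowerSeries.coeff_mul]
  refine Finset.sum_congr rfl fun q hq => ?_
  rw [Finset.HasAntidiagonal.mem_antidiagonal] at hq
  rw [coeff_trunc, coeff_trunc, if_pos (by omega), if_pos (by omega)]

lemma PScomp_pow (F u : R⟦X⟧) (t : ℕ) :
    (F ^ t).comp (X * u) = (F.comp (X * u)) ^ t := by
  induction t with
  | zero => simpa using PScomp_one u
  | succ t ih => rw [pow_succ, PScomp_mul, ih, pow_succ]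

lemma map_derivative {S : Type*} [CommRing S] (φ : R →+* S) (f : R⟦X⟧) :
    PowerSeries.map φ (d⁄dX R f) = d⁄dX S (PowerSeries.map φ f) := by
  ext n
  simp [coeff_derivative, PowerSeries.coeff_map]

/-- char-zero domain case of the residue identity -/
lemma coeff_pow_eq_deriv_aux {S : Type*} [CommRing S] [IsDomain S] [CharZero S]
    (s : ℕ) (hs : 1 ≤ s) (w : S⟦X⟧) :
    coeff s (w ^ s) = coeff (s - 1) (d⁄dX S w * w ^ (s - 1)) := by
  obtain ⟨t, rfl⟩ : ∃ t, s = t + 1 := ⟨s - 1, by omega⟩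
  simp only [Nat.add_sub_cancel]
  have h1 := Derivation.leibniz_pow (d⁄dX S) w (t+1)
  simp only [Nat.add_sub_cancel] at h1
  have h2 := congrArg (coeff t) h1
  rw [coeff_derivative] at h2
  have hsne : ((t : S) + 1) ≠ 0 := by
    have h : ((t+1 : ℕ) : S) ≠ 0 := Nat.cast_ne_zero.mpr (by omega)
    push_cast at h; exact h
  apply mul_right_cancel₀ hsne
  calc coeff (t+1) (w ^ (t+1)) * ((t:S)+1) = coeff t ((t+1) • w ^ t • d⁄dX S w) := h2
    _ = (t+1) • coeff t (w ^ t • d⁄dX S w) := map_nsmul _ _ _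
    _ = coeff t (d⁄dX S w * w ^ t) * ((t:S)+1) := by
        rw [smul_eq_mul, nsmul_eq_mul, mul_comm (w ^ t)]
        push_cast
        ring

/-- The characteristic-free residue identity. -/
lemma coeff_pow_eq_deriv (s : ℕ) (hs : 1 ≤ s) (w : R⟦X⟧) :
    coeff s (w ^ s) = coeff (s - 1) (d⁄dX R w * w ^ (s - 1)) := by
  classical
  set Rz := MvPolynomial (Fin (s + 1)) ℤ
  set Rq := MvPolynomial (Fin (s + 1)) ℚ
  set W : Rz⟦X⟧ := PowerSeries.mk (fun i => if h : i < s + 1 then MvPolynomial.X ⟨i, h⟩ else 0) with hW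
  set φ : Rz →+* Rq := (MvPolynomial.map (Int.castRingHom ℚ)) with hφ
  have hz : coeff s (W ^ s) = coeff (s - 1) (d⁄dX Rz W * W ^ (s - 1)) := by
    have hinj : Function.Injective φ := MvPolynomial.map_injective _ Int.cast_injective
    apply hinj
    have h := coeff_pow_eq_deriv_aux (S := Rq) s hs (PowerSeries.map φ W)
    rw [← PowerSeries.coeff_map, ← PowerSeries.coeff_map, map_mul (PowerSeries.map φ),
      map_pow (PowerSeries.map φ) W s, map_pow (PowerSeries.map φ) W (s-1), map_derivative]
    exact h
  set ψ : Rz →+* R := MvPolynomial.eval₂Hom (Int.castRingHom R) (fun i => coeff i w) with hψ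
  set W1 : R⟦X⟧ := PowerSeries.map ψ W with hW1
  have hz' : coeff s (W1 ^ s) = coeff (s - 1) (d⁄dX R W1 * W1 ^ (s - 1)) := by
    have h := congrArg ψ hz
    rw [← PowerSeries.coeff_map, ← PowerSeries.coeff_map, map_mul (PowerSeries.map ψ),
      map_pow (PowerSeries.map ψ) W s, map_pow (PowerSeries.map ψ) W (s-1), map_derivative] at h
    exact h
  have hcoeff : ∀ i ≤ s, coeff i W1 = coeff i w := by
    intro i hi
    rw [hW1, PowerSeries.coeff_map, hW, coeff_mk, dif_pos (by omega : i < s + 1)]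
    rw [hψ, MvPolynomial.eval₂Hom_X']
  calc coeff s (w ^ s) = coeff s (W1 ^ s) :=
        (coeff_pow_congr hcoeff s s (le_refl s)).symm
    _ = coeff (s-1) (d⁄dX R W1 * W1 ^ (s-1)) := hz'
    _ = coeff (s-1) (d⁄dX R w * w ^ (s-1)) := by
        refine coeff_mul_congr (fun i hi => ?_) (fun i hi => coeff_pow_congr hcoeff _ i (by omega))
        rw [coeff_derivative, coeff_derivative, hcoeff (i+1) (by omega)]

lemma deriv_X_mul (u : R⟦X⟧) : d⁄dX R (X * u) = u + X * d⁄dX R u := by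
  rw [Derivation.leibniz]
  simp [smul_eq_mul]
  ring

lemma crux_coeff (u w : R⟦X⟧) (huw : u * w = 1) (s : ℕ) (hs : 1 ≤ s) :
    coeff s ((d⁄dX R (X * u)) * w ^ (s + 1)) = 0 := by
  have hduw : (d⁄dX R u) * w = -(u * d⁄dX R w) := by
    have h := congrArg (d⁄dX R) huw
    rw [Derivation.leibniz, Derivation.map_one_eq_zero] at h
    simp only [smul_eq_mul] at h
    linear_combination h
  have e1 : u * w ^ (s + 1) = w ^ s := by
    rw [pow_succ', ← mul_assoc, huw, one_mul]
  have e2 : (d⁄dX R u) * w ^ (s + 1) = -(d⁄dX R w * w ^ (s - 1)) := by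
    have hsplit : w ^ (s + 1) = w * (w ^ (s - 1) * w) := by
      rw [← pow_succ, ← pow_succ']
      congr 1
      omega
    calc (d⁄dX R u) * w ^ (s+1) = ((d⁄dX R u) * w) * (w ^ (s-1) * w) := by rw [hsplit]; ring
      _ = -(u * d⁄dX R w) * (w ^ (s-1) * w) := by rw [hduw]
      _ = -((d⁄dX R w * w ^ (s-1)) * (u * w)) := by ring
      _ = -(d⁄dX R w * w ^ (s - 1)) := by rw [huw, mul_one]
  rw [deriv_X_mul, add_mul, map_add, e1, mul_assoc, e2]
  rw [show s = (s - 1) + 1 by omega, coeff_succ_X_mul]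
  rw [← (show s = (s - 1) + 1 by omega)]
  rw [coeff_pow_eq_deriv s hs w]
  simp

lemma key_lagrange (u w F : R⟦X⟧) (huw : u * w = 1) (m : ℕ) :
    coeff m (F.comp (X * u) * ((d⁄dX R (X * u)) * w ^ (m + 1))) = coeff m F := by
  set Φ' := d⁄dX R (X * u) with hΦ'
  set G := Φ' * w ^ (m + 1) with hG
  have hc0 : constantCoeff u * constantCoeff w = 1 := by
    have := congrArg (constantCoeff) huw
    rwa [map_mul, map_one] at this
  have step1 : coeff m (F.comp (X * u) * G) =
      coeff m (((trunc (m + 1) F).eval₂ C (X * u)) * G) :=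
    coeff_mul_congr (fun i hi => coeff_comp_eq_eval₂ F u hi) (fun i _ => rfl)
  rw [step1, Polynomial.eval₂_eq_sum_range' C (natDegree_trunc_lt F m) (X * u),
    Finset.sum_mul, map_sum]
  have hterm : ∀ j ∈ Finset.range (m + 1),
      coeff m (C ((trunc (m + 1) F).coeff j) * (X * u) ^ j * G) =
      if j = m then coeff m F else 0 := by
    intro j hj
    rw [Finset.mem_range] at hj
    rw [mul_assoc, coeff_C_mul]
    rcases eq_or_ne j m with rfl | hjm
    · rw [if_pos rfl, coeff_trunc, if_pos (by omega)]
      have hrw : (X * u) ^ j * G = X ^ j * (u ^ j * Φ' * w ^ (j + 1)) := by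
        rw [mul_pow, hG]; ring
      rw [hrw, coeff_X_pow_mul', if_pos (le_refl j), Nat.sub_self,
        coeff_zero_eq_constantCoeff]
      have hΦ'c : constantCoeff Φ' = constantCoeff u := by
        rw [hΦ', ← coeff_zero_eq_constantCoeff]
        rw [coeff_derivative, coeff_succ_X_mul, coeff_zero_eq_constantCoeff]
        push_cast
        ring
      rw [map_mul, map_mul, map_pow, map_pow, hΦ'c]
      have hone : constantCoeff u ^ j * constantCoeff u * constantCoeff w ^ (j + 1) =
          (constantCoeff u * constantCoeff w) ^ (j + 1) := by ring
      rw [hone, hc0, one_pow, mul_one]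
    · rw [if_neg hjm]
      have hjlt : j < m := by omega
      set s := m - j with hs
      have hrw : (X * u) ^ j * G = X ^ j * (Φ' * w ^ (s + 1) * (u ^ j * w ^ j)) := by
        rw [mul_pow, hG, show m + 1 = (s + 1) + j by omega, pow_add]
        ring
      rw [hrw, coeff_X_pow_mul', if_pos (by omega : j ≤ m)]
      rw [← mul_pow, huw, one_pow, mul_one]
      rw [show m - j = s from rfl, crux_coeff u w huw s (by omega), mul_zero]
  rw [Finset.sum_congr rfl hterm, Finset.sum_ite_eq' (Finset.range (m + 1)) m (fun _ => coeff m F),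
    if_pos (Finset.self_mem_range_succ m)]

end Aux

/-- The vertical one-p-th Riordan array of `(g, f)` is the Riordan array
`(X·Φ'·g(Φ)·f(Φ)^r / Φ^{r+1}, Φ)`, i.e. its `(n,k)` entry is
`d_{pn+r-k, (p-1)n+r} = [X^{pn+r}](X^k · g · f^{(p-1)n+r})`. -/
theorem one_pth_vertical_riordan {K : Type*} [Field K] (g f : K⟦X⟧)
    (hg : constantCoeff g ≠ 0) (hf0 : constantCoeff f = 0)
    (hf1 : coeff 1 f ≠ 0) (p r : ℕ) (hp : 1 ≤ p) (Φ : K⟦X⟧)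
    (hΦ0 : constantCoeff Φ = 0) (hΦ1 : coeff 1 Φ ≠ 0)
    (hΦ : Φ ^ p = X * (f.comp Φ) ^ (p - 1)) :
    ∃ h : K⟦X⟧,
      X * (d⁄dX K Φ) * (g.comp Φ) * (f.comp Φ) ^ r = h * Φ ^ (r + 1) ∧
      ∀ n k : ℕ,
        coeff n (h * Φ ^ k) =
          coeff (p * n + r) (X ^ k * g * f ^ ((p - 1) * n + r)) := by
  classical
  obtain ⟨u, hXu⟩ : ∃ u, Φ = X * u := X_dvd_iff.mpr hΦ0
  subst hXu
  have hu0 : constantCoeff u ≠ 0 := by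
    rwa [coeff_succ_X_mul, coeff_zero_eq_constantCoeff] at hΦ1
  set w : K⟦X⟧ := u⁻¹ with hw
  have huw : u * w = 1 := by
    rw [hw, mul_comm]
    exact PowerSeries.inv_mul_cancel u hu0
  -- f ∘ Φ = X * v
  have hfΦ0 : constantCoeff (f.comp (X * u)) = 0 := by
    rw [← coeff_zero_eq_constantCoeff, coeff_comp]
    simpa [coeff_zero_eq_constantCoeff] using hf0
  obtain ⟨v, hXv⟩ : ∃ v, f.comp (X * u) = X * v := X_dvd_iff.mpr hfΦ0
  have hv0 : constantCoeff v ≠ 0 := by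
    have h1 : coeff 1 (f.comp (X * u)) = constantCoeff v := by
      rw [hXv, coeff_succ_X_mul, coeff_zero_eq_constantCoeff]
    have h2 : coeff 1 (f.comp (X * u)) = coeff 1 f * constantCoeff u := by
      rw [coeff_comp]
      rw [show (1:ℕ) + 1 = 2 from rfl, Finset.sum_range_succ, Finset.sum_range_succ,
        Finset.range_zero, Finset.sum_empty, pow_zero, pow_one, PowerSeries.coeff_one,
        coeff_succ_X_mul, coeff_zero_eq_constantCoeff]
      simp
    rw [← h1, h2]
    exact mul_ne_zero hf1 hu0
  set q := p - 1 with hq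
  have hpq : p = q + 1 := by omega
  have hX0 : (X : K⟦X⟧) ≠ 0 := X_ne_zero
  have huv : u ^ p = v ^ q := by
    apply mul_left_cancel₀ (pow_ne_zero p hX0)
    calc X ^ p * u ^ p = (X * u) ^ p := by rw [mul_pow]
      _ = X * (X * v) ^ q := by rw [hΦ, hXv, hq]
      _ = X ^ p * v ^ q := by rw [mul_pow, hpq, pow_succ]; ring
  have hu_ne : u ≠ 0 := fun h => hu0 (by rw [h, map_zero])
  set gΦ := g.comp (X * u) with hgΦ
  set Φ' := d⁄dX K (X * u) with hΦ'd
  refine ⟨Φ' * gΦ * v ^ r * w ^ (r + 1), ?_, ?_⟩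
  · -- the divisibility identity
    have hr1 : u ^ (r+1) * w ^ (r+1) = 1 := by rw [← mul_pow, huw, one_pow]
    rw [hXv, mul_pow X v, mul_pow X u]
    linear_combination (-(X ^ (r+1) * Φ' * gΦ * v ^ r)) * hr1
  · intro n k
    set N := (p - 1) * n + r with hN
    have hpn : p * n = q * n + n := by rw [hpq]; ring
    have hNq : N = q * n + r := by rw [hN, hq]
    -- rewrite LHS
    rw [mul_pow X u, show Φ' * gΦ * v ^ r * w ^ (r + 1) * (X ^ k * u ^ k) =
      X ^ k * (Φ' * gΦ * v ^ r * w ^ (r + 1) * u ^ k) from by ring, coeff_X_pow_mul']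
    -- rewrite RHS
    rw [mul_assoc (X ^ k) g (f ^ N), coeff_X_pow_mul']
    by_cases hkpn : k ≤ p * n + r
    · -- use the key lemma on the RHS
      rw [if_pos hkpn]
      set m := p * n + r - k with hm
      have hmk : m + k = p * n + r := Nat.sub_add_cancel hkpn
      rw [← key_lagrange u w (g * f ^ N) huw m, PScomp_mul, PScomp_pow, hXv]
      rw [show gΦ * (X * v) ^ N * (Φ' * w ^ (m + 1)) =
        X ^ N * (gΦ * v ^ N * Φ' * w ^ (m + 1)) from by rw [mul_pow]; ring]
      rw [coeff_X_pow_mul']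
      by_cases hkn : k ≤ n
      · rw [if_pos (by omega : k ≤ n), if_pos (by omega : N ≤ m)]
        have hNsplit : v ^ N = u ^ (p * n) * v ^ r := by
          rw [hNq, pow_add, pow_mul, ← huv, ← pow_mul]
        have hexp : u ^ (r+1) * u ^ (p*n) = u ^ (m+1) * u ^ k := by
          rw [← pow_add, ← pow_add]
          congr 1
          omega
        have hm1 : u ^ (m+1) * w ^ (m+1) = 1 := by rw [← mul_pow, huw, one_pow]
        have hr1 : u ^ (r+1) * w ^ (r+1) = 1 := by rw [← mul_pow, huw, one_pow]
        have E : gΦ * v ^ N * Φ' * w ^ (m + 1) =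
            Φ' * gΦ * v ^ r * w ^ (r + 1) * u ^ k := by
          apply mul_left_cancel₀
            (mul_ne_zero (pow_ne_zero (m+1) hu_ne) (pow_ne_zero (r+1) hu_ne))
          calc u ^ (m+1) * u ^ (r+1) * (gΦ * v ^ N * Φ' * w ^ (m + 1))
              = (u ^ (m+1) * w ^ (m+1)) * ((u ^ (r+1) * u ^ (p*n)) * (gΦ * v ^ r * Φ')) := by
                rw [hNsplit]; ring
            _ = (u ^ (r+1) * w ^ (r+1)) * ((u ^ (m+1) * u ^ k) * (gΦ * v ^ r * Φ')) := by
                rw [hm1, hexp, hr1]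
            _ = u ^ (m+1) * u ^ (r+1) * (Φ' * gΦ * v ^ r * w ^ (r + 1) * u ^ k) := by
                rw [hr1, one_mul]
                linear_combination (-(u ^ (m+1) * u ^ k * (gΦ * v ^ r * Φ'))) * hr1
        rw [E]
        have hmn : m - N = n - k := by omega
        rw [hmn]
      · rw [if_neg (by omega : ¬ k ≤ n), if_neg (by omega : ¬ N ≤ m)]
    · rw [if_neg hkpn, if_neg (by omega : ¬ k ≤ n)]
end

section
/- Let K be a field, let q ∈ K⟦X⟧ with q(0) ≠ 0, set f = X·q, and let p ≥ 1 be an integer. Let Φ ∈ K⟦X⟧ satisfy Φ(0) = 0, [X^1]Φ ≠ 0 and Φ^p = X·(f∘Φ)^{p−1}. Then Φ = X·((q^{p−1})∘Φ); that is, the generating function of the A-sequence of the vertical one-p-th Riordan array of (g,f) is (f/X)^{p−1}. -/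
open PowerSeries Finset

namespace AuxComp

variable {K : Type*} [CommRing K] {Φ : K⟦X⟧}

lemma coeff_pow_zero (hΦ0 : constantCoeff Φ = 0) {n j : ℕ} (h : n < j) :
    coeff n (Φ ^ j) = 0 :=
  X_pow_dvd_iff.mp (pow_dvd_pow_of_dvd (X_dvd_iff.mpr hΦ0) j) n h

lemma coeff_comp (hΦ0 : constantCoeff Φ = 0) (F : K⟦X⟧) {n N : ℕ} (hn : n < N) :
    coeff n (F.comp Φ) = ∑ j ∈ range N, coeff j F * coeff n (Φ ^ j) := by
  rw [PowerSeries.comp, coeff_mk]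
  apply Finset.sum_subset
  · intro i hi
    rw [mem_range] at hi ⊢; omega
  · intro j _ hj
    rw [mem_range, not_lt] at hj
    rw [coeff_pow_zero hΦ0 (by omega), mul_zero]

lemma coeff_comp_eval (hΦ0 : constantCoeff Φ = 0) (F : K⟦X⟧) {n N : ℕ} (hn : n < N) :
    coeff n (F.comp Φ) = coeff n (Polynomial.eval₂ C Φ (trunc N F)) := by
  rw [coeff_comp hΦ0 F hn, eval₂_trunc_eq_sum_range, map_sum]
  exact Finset.sum_congr rfl fun i _ => by rw [coeff_C_mul]

lemma coeff_eval_zero (hΦ0 : constantCoeff Φ = 0) {P : Polynomial K} {n N : ℕ}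
    (h : ∀ i < N, P.coeff i = 0) (hn : n < N) :
    coeff n (Polynomial.eval₂ C Φ P) = 0 := by
  rw [Polynomial.eval₂_eq_sum_range, map_sum]
  apply Finset.sum_eq_zero
  intro i _
  rw [coeff_C_mul]
  by_cases hi : i < N
  · rw [h i hi, zero_mul]
  · rw [coeff_pow_zero hΦ0 (by omega), mul_zero]

lemma comp_mul (hΦ0 : constantCoeff Φ = 0) (F G : K⟦X⟧) :
    (F * G).comp Φ = F.comp Φ * G.comp Φ := by
  ext n
  set N := n + 1 with hN
  have hn : n < N := Nat.lt_succ_self n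
  have hdiff : ∀ i < N, (trunc N F * trunc N G - trunc N (F * G)).coeff i = 0 := by
    intro i hi
    rw [Polynomial.coeff_sub, sub_eq_zero]
    have h1 : (trunc N F * trunc N G).coeff i
        = coeff i (((trunc N F : K⟦X⟧)) * ((trunc N G : K⟦X⟧))) := by
      rw [← Polynomial.coe_mul, Polynomial.coeff_coe]
    rw [h1, ← coeff_mul_eq_coeff_trunc_mul_trunc F G hi, coeff_trunc, if_pos hi]
  have hz := coeff_eval_zero hΦ0 hdiff hn
  rw [Polynomial.eval₂_sub, map_sub, sub_eq_zero, Polynomial.eval₂_mul] at hz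
  rw [coeff_comp_eval hΦ0 _ hn, ← hz, coeff_mul, coeff_mul]
  apply Finset.sum_congr rfl
  intro ab hab
  rw [Finset.HasAntidiagonal.mem_antidiagonal] at hab
  rw [coeff_comp_eval hΦ0 F (show ab.1 < N by omega),
    coeff_comp_eval hΦ0 G (show ab.2 < N by omega)]

lemma comp_one (hΦ0 : constantCoeff Φ = 0) : (1 : K⟦X⟧).comp Φ = 1 := by
  ext n
  rw [coeff_comp hΦ0 1 (Nat.lt_succ_self n)]
  rw [Finset.sum_eq_single 0]
  · simp
  · intro j _ hj
    rw [coeff_one, if_neg hj, zero_mul]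
  · simp

lemma comp_pow (hΦ0 : constantCoeff Φ = 0) (F : K⟦X⟧) (m : ℕ) :
    (F ^ m).comp Φ = (F.comp Φ) ^ m := by
  induction m with
  | zero => simpa using comp_one hΦ0
  | succ m ih => rw [pow_succ, pow_succ, comp_mul hΦ0, ih]

lemma comp_X (hΦ0 : constantCoeff Φ = 0) : (X : K⟦X⟧).comp Φ = Φ := by
  ext n
  rw [coeff_comp hΦ0 X (show n < n + 2 by omega)]
  rw [Finset.sum_eq_single 1]
  · rw [coeff_X, if_pos rfl, one_mul, pow_one]
  · intro j _ hj
    rw [coeff_X, if_neg hj, zero_mul]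
  · intro h
    exact absurd (Finset.mem_range.mpr (by omega)) h

end AuxComp

/-- The generating function of the A-sequence of the vertical one-p-th
Riordan array of `(g, f)` (whose second component is `Φ`) is
`(f/X)^{p-1} = q^{p-1}` where `f = X·q`: that is, `Φ = X·(q^{p-1} ∘ Φ)`. -/
theorem one_pth_vertical_A_sequence {K : Type*} [Field K] (q : K⟦X⟧)
    (hq : constantCoeff q ≠ 0) (p : ℕ) (hp : 1 ≤ p) (Φ : K⟦X⟧)
    (hΦ0 : constantCoeff Φ = 0) (hΦ1 : coeff 1 Φ ≠ 0)
    (hΦ : Φ ^ p = X * ((X * q).comp Φ) ^ (p - 1)) :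
    Φ = X * (q ^ (p - 1)).comp Φ := by
  have hΦne : Φ ≠ 0 := fun h => hΦ1 (by simp [h])
  have hpow : Φ ^ (p - 1) ≠ 0 := pow_ne_zero _ hΦne
  apply mul_left_cancel₀ hpow
  have h1 : (X * q).comp Φ = Φ * q.comp Φ := by
    rw [AuxComp.comp_mul hΦ0, AuxComp.comp_X hΦ0]
  calc Φ ^ (p - 1) * Φ = Φ ^ p := by rw [← pow_succ]; congr 1; omega
    _ = X * (Φ * q.comp Φ) ^ (p - 1) := by rw [hΦ, h1]
    _ = Φ ^ (p - 1) * (X * (q ^ (p - 1)).comp Φ) := by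
        rw [mul_pow, AuxComp.comp_pow hΦ0]; ring
end

section
/- Let K be a field, let g, f ∈ K⟦X⟧ with constant term of g nonzero, constant term of f zero and [X^1]f ≠ 0, and let p ≥ 1, r ≥ 0 be integers. Let Φ ∈ K⟦X⟧ satisfy Φ(0) = 0, [X^1]Φ ≠ 0 and Φ^p = X·(f∘Φ)^{p−1}. Then there exists h ∈ K⟦X⟧ such that X·Φ'·(g∘Φ)·(f∘Φ)^r = h·Φ^{r+1}, and for all integers n, k ≥ 0 one has [X^n](h·(f∘Φ)^k) = [X^{pn+r}](g · f^{(p−1)n+r+k}). (Equivalently, the horizontal one-p-th array with entries d_{pn+r,(p−1)n+r+k} of the Riordan array (g,f) is the Riordan array (XΦ'·g(Φ)·f(Φ)^r/Φ^{r+1}, f(Φ)).) -/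
open PowerSeries Finset

namespace OnePth

variable {K : Type*} [CommRing K]

lemma coeff_pow_phi {Φ : K⟦X⟧} (hΦ0 : constantCoeff Φ = 0) {j n : ℕ} (h : n < j) :
    coeff n (Φ ^ j) = 0 :=
  X_pow_dvd_iff.mp (pow_dvd_pow_of_dvd (X_dvd_iff.mpr hΦ0) j) n h
lemma coeff_comp (F Φ : K⟦X⟧) (n : ℕ) :
    coeff n (F.comp Φ) = ∑ j ∈ range (n+1), coeff j F * coeff n (Φ ^ j) := by
  simp [PowerSeries.comp]
lemma coeff_comp' {Φ : K⟦X⟧} (hΦ0 : constantCoeff Φ = 0) (F : K⟦X⟧) {n N : ℕ} (hn : n < N) :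
    coeff n (F.comp Φ) = ∑ j ∈ range N, coeff j F * coeff n (Φ ^ j) := by
  rw [coeff_comp]
  refine Finset.sum_subset (by simp [Nat.succ_le_iff, hn]) ?_
  intro j hj hj'
  rw [coeff_pow_phi hΦ0 (by simp at hj' ⊢; omega), mul_zero]
lemma coeff_comp_SN {Φ : K⟦X⟧} (hΦ0 : constantCoeff Φ = 0) (F : K⟦X⟧) {n N : ℕ} (hn : n < N) :
    coeff n (F.comp Φ) = coeff n (∑ j ∈ range N, C (coeff j F) * Φ ^ j) := by
  rw [coeff_comp' hΦ0 F hn, map_sum]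
  simp [coeff_C_mul]
lemma comp_sub_dvd {Φ : K⟦X⟧} (hΦ0 : constantCoeff Φ = 0) (F : K⟦X⟧) (N : ℕ) :
    (X : K⟦X⟧) ^ N ∣ (F.comp Φ - ∑ j ∈ range N, C (coeff j F) * Φ ^ j) := by
  rw [X_pow_dvd_iff]
  intro m hm
  rw [map_sub, coeff_comp_SN hΦ0 F hm, sub_self]

lemma comp_C {Φ : K⟦X⟧} (a : K) : (C a).comp Φ = C a := by
  ext n
  rw [coeff_comp]
  rw [Finset.sum_eq_single 0] <;> simp [coeff_C]
  intro h; omega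

lemma comp_X {Φ : K⟦X⟧} (hΦ0 : constantCoeff Φ = 0) : (X : K⟦X⟧).comp Φ = Φ := by
  ext n
  rw [coeff_comp]
  rcases n with _ | n
  · simpa using hΦ0.symm
  · rw [Finset.sum_eq_single 1] <;> simp [coeff_X]
    · omega

lemma comp_sum {ι : Type*} (s : Finset ι) (F : ι → K⟦X⟧) (Φ : K⟦X⟧) :
    (∑ i ∈ s, F i).comp Φ = ∑ i ∈ s, (F i).comp Φ := by
  ext n
  rw [coeff_comp, map_sum]
  simp only [coeff_comp, map_sum, Finset.sum_mul]
  exact Finset.sum_comm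

lemma comp_mul {Φ : K⟦X⟧} (hΦ0 : constantCoeff Φ = 0) (F G : K⟦X⟧) :
    (F * G).comp Φ = F.comp Φ * G.comp Φ := by
  ext n
  set N := n + 1 with hN
  obtain ⟨B, hB⟩ := comp_sub_dvd hΦ0 F N
  obtain ⟨B', hB'⟩ := comp_sub_dvd hΦ0 G N
  set S1 : K⟦X⟧ := ∑ j ∈ range N, C (coeff j F) * Φ ^ j with hS1
  set S2 : K⟦X⟧ := ∑ j ∈ range N, C (coeff j G) * Φ ^ j with hS2
  have hF : F.comp Φ = S1 + X ^ N * B := by rw [← hB]; ring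
  have hG : G.comp Φ = S2 + X ^ N * B' := by rw [← hB']; ring
  have expand : (S1 + X ^ N * B) * (S2 + X ^ N * B') =
      S1 * S2 + X ^ N * (B * S2 + S1 * B' + X ^ N * (B * B')) := by ring
  rw [hF, hG, expand, map_add, coeff_X_pow_mul', if_neg (by omega), add_zero]
  rw [coeff_comp_SN hΦ0 (F * G) (by omega : n < N)]
  -- now: coeff n (∑ m ∈ range N, C ((F*G)_m) Φ^m) = coeff n (S1 * S2)
  have hS12 : S1 * S2 = ∑ j ∈ range N, ∑ k ∈ range N,
      C (coeff j F * coeff k G) * Φ ^ (j + k) := by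
    rw [hS1, hS2, Finset.sum_mul_sum]
    refine Finset.sum_congr rfl fun j _ => Finset.sum_congr rfl fun k _ => ?_
    rw [map_mul, pow_add]; ring
  rw [hS12]
  rw [map_sum, map_sum]
  simp only [map_sum, coeff_C_mul]
  -- LHS: ∑ m < N, (∑ ab ∈ antidiagonal m, F_a G_b) * coeff n Φ^m
  -- RHS: ∑ j ∑ k, F_j G_k * coeff n Φ^(j+k)
  simp only [PowerSeries.coeff_mul, Finset.sum_mul]
  rw [← Finset.sum_product']
  have disj : (↑(range N) : Set ℕ).PairwiseDisjoint Finset.HasAntidiagonal.antidiagonal := by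
    intro a _ b _ hab
    simp only [Function.onFun]
    rw [Finset.disjoint_left]
    intro x hxa hxb
    exact hab ((Finset.HasAntidiagonal.mem_antidiagonal.mp hxa).symm.trans (Finset.HasAntidiagonal.mem_antidiagonal.mp hxb))
  calc ∑ x ∈ range N, ∑ i ∈ antidiagonal x, coeff i.1 F * coeff i.2 G * coeff n (Φ ^ x)
      = ∑ x ∈ range N, ∑ i ∈ antidiagonal x,
          coeff i.1 F * coeff i.2 G * coeff n (Φ ^ (i.1 + i.2)) := by
        refine Finset.sum_congr rfl fun m _ => Finset.sum_congr rfl fun i hi => ?_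
        rw [Finset.HasAntidiagonal.mem_antidiagonal.mp hi]
    _ = ∑ i ∈ (range N).biUnion Finset.HasAntidiagonal.antidiagonal,
          coeff i.1 F * coeff i.2 G * coeff n (Φ ^ (i.1 + i.2)) :=
        (Finset.sum_biUnion disj).symm
    _ = ∑ i ∈ range N ×ˢ range N,
          coeff i.1 F * coeff i.2 G * coeff n (Φ ^ (i.1 + i.2)) := by
        refine Finset.sum_subset ?_ ?_
        · intro i hi
          obtain ⟨m, hm, hi⟩ := Finset.mem_biUnion.mp hi
          have := Finset.HasAntidiagonal.mem_antidiagonal.mp hi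
          simp only [Finset.mem_range] at hm
          simp only [Finset.mem_product, Finset.mem_range]
          omega
        · intro i hi hni
          have : n < i.1 + i.2 := by
            by_contra hc
            exact hni (Finset.mem_biUnion.mpr ⟨i.1 + i.2, Finset.mem_range.mpr (by omega),
              Finset.HasAntidiagonal.mem_antidiagonal.mpr rfl⟩)
          rw [coeff_pow_phi hΦ0 this, mul_zero]

lemma comp_one {Φ : K⟦X⟧} : (1 : K⟦X⟧).comp Φ = 1 := by
  rw [← map_one (C : K →+* K⟦X⟧), comp_C, map_one]

lemma comp_pow {Φ : K⟦X⟧} (hΦ0 : constantCoeff Φ = 0) (F : K⟦X⟧) (k : ℕ) :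
    (F ^ k).comp Φ = (F.comp Φ) ^ k := by
  induction k with
  | zero => simpa using comp_one
  | succ k ih => rw [pow_succ, comp_mul hΦ0, ih, pow_succ]

lemma constantCoeff_comp {Φ : K⟦X⟧} (hΦ0 : constantCoeff Φ = 0) (F : K⟦X⟧) :
    constantCoeff (F.comp Φ) = constantCoeff F := by
  rw [← coeff_zero_eq_constantCoeff, coeff_comp]
  simp

lemma derivative_map {R S : Type*} [CommRing R] [CommRing S] (φ : R →+* S) (F : R⟦X⟧) :
    PowerSeries.map φ (d⁄dX R F) = d⁄dX S (PowerSeries.map φ F) := by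
  ext n
  simp [coeff_map, coeff_derivative]

lemma crux_aux {R : Type*} [CommRing R] [NoZeroDivisors R] (s : R⟦X⟧) (e : ℕ)
    (hdR : ((e : R) + 1) ≠ 0) :
    coeff (e + 1) (s ^ (e + 1)) = coeff e (s ^ e * d⁄dX R s) := by
  have hpow : d⁄dX R (s ^ (e + 1)) = (e + 1) • (s ^ e * d⁄dX R s) := by
    rw [Derivation.leibniz_pow, Nat.add_sub_cancel, smul_eq_mul]
  have h1 : coeff e (d⁄dX R (s ^ (e + 1))) = coeff (e + 1) (s ^ (e + 1)) * (e + 1) := by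
    rw [coeff_derivative]
  rw [hpow, map_nsmul, nsmul_eq_mul] at h1
  apply mul_left_cancel₀ hdR
  push_cast at h1 ⊢
  linear_combination -h1

lemma crux (s : K⟦X⟧) (d : ℕ) (hd : 1 ≤ d) :
    coeff d (s ^ d) = coeff (d - 1) (s ^ (d - 1) * d⁄dX K s) := by
  obtain ⟨e, rfl⟩ : ∃ e, d = e + 1 := ⟨d - 1, by omega⟩
  simp only [Nat.add_sub_cancel]
  set φ : MvPolynomial ℕ ℤ →+* K :=
    (MvPolynomial.eval₂Hom (Int.castRingHom K) (fun n => coeff n s)) with hφ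
  set S : (MvPolynomial ℕ ℤ)⟦X⟧ := PowerSeries.mk fun n => MvPolynomial.X n with hS
  have hmap : PowerSeries.map φ S = s := by
    ext n
    simp [hS, coeff_map, hφ]
  have hdA : ((e : MvPolynomial ℕ ℤ) + 1) ≠ 0 := by
    have : ((e : MvPolynomial ℕ ℤ) + 1) = ((e + 1 : ℕ) : MvPolynomial ℕ ℤ) := by push_cast; ring
    rw [this]
    exact Nat.cast_ne_zero.mpr (by omega)
  have key := crux_aux S e hdA
  have hmp : ∀ m : ℕ, PowerSeries.map φ (S ^ m) = s ^ m := fun m => by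
    rw [map_pow, hmap]
  have e1 : coeff (e+1) (s ^ (e+1)) = φ (coeff (e+1) (S ^ (e+1))) := by
    rw [← coeff_map, hmp]
  have h3 : PowerSeries.map φ (S ^ e * d⁄dX (MvPolynomial ℕ ℤ) S) = s ^ e * d⁄dX K s := by
    rw [map_mul, hmp, derivative_map, hmap]
  have e2 : coeff e (s ^ e * d⁄dX K s)
      = φ (coeff e (S ^ e * d⁄dX (MvPolynomial ℕ ℤ) S)) := by
    rw [← h3, coeff_map]
  rw [e1, e2, key]

lemma deriv_one_rel {v w : K⟦X⟧} (hvw : v * w = 1) :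
    v * d⁄dX K w + w * d⁄dX K v = 0 := by
  have := congrArg (d⁄dX K) hvw
  rwa [Derivation.leibniz, smul_eq_mul, smul_eq_mul, Derivation.map_one_eq_zero] at this

lemma Jmono {Φ v w : K⟦X⟧} (hΦv : Φ = X * v) (hvw : v * w = 1) {i m : ℕ} (hi : i ≤ m) :
    coeff m (Φ ^ i * d⁄dX K Φ * w ^ (m + 1)) = if i = m then 1 else 0 := by
  have hd : d⁄dX K Φ = X * d⁄dX K v + v := by
    rw [hΦv, Derivation.leibniz, smul_eq_mul, smul_eq_mul, derivative_X, mul_one]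
  have key : Φ ^ i * d⁄dX K Φ * w ^ (m + 1) =
      X ^ i * (v ^ (i + 1) * w ^ (m + 1) + X * (d⁄dX K v * v ^ i * w ^ (m + 1))) := by
    rw [hd, hΦv]; ring
  rw [key, coeff_X_pow_mul', if_pos hi]
  rcases eq_or_lt_of_le hi with rfl | hlt
  · rw [if_pos rfl, Nat.sub_self]
    have h1 : v ^ (i + 1) * w ^ (i + 1) = 1 := by rw [← mul_pow, hvw, one_pow]
    rw [map_add, coeff_zero_eq_constantCoeff, h1]
    simp
  · rw [if_neg (by omega)]
    obtain ⟨d, rfl⟩ : ∃ d, m = i + (d + 1) := ⟨m - i - 1, by omega⟩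
    have hsub : i + (d + 1) - i = d + 1 := by omega
    rw [hsub, map_add]
    have ha : v ^ (i + 1) * w ^ (i + (d + 1) + 1) = w ^ (d + 1) * (v * w) ^ (i + 1) := by ring
    have hb : d⁄dX K v * v ^ i * w ^ (i + (d + 1) + 1) =
        (d⁄dX K v * w ^ (d + 2)) * (v * w) ^ i := by ring
    have h0 : w * d⁄dX K v = -(v * d⁄dX K w) := by linear_combination deriv_one_rel hvw
    have hc : d⁄dX K v * w ^ (d + 2) = -(w ^ d * d⁄dX K w) := by
      calc d⁄dX K v * w ^ (d + 2) = (w * d⁄dX K v) * w ^ (d + 1) := by ring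
        _ = -(v * d⁄dX K w) * w ^ (d + 1) := by rw [h0]
        _ = -(w ^ d * d⁄dX K w) * (v * w) := by ring
        _ = -(w ^ d * d⁄dX K w) := by rw [hvw, mul_one]
    rw [ha, hvw, one_pow, mul_one, hb, hc, hvw, one_pow, mul_one]
    rw [coeff_succ_X_mul]
    have := crux (K := K) w (d + 1) (by omega)
    rw [Nat.add_sub_cancel] at this
    rw [this]
    simp


lemma comp_add {Φ : K⟦X⟧} (F G : K⟦X⟧) : (F + G).comp Φ = F.comp Φ + G.comp Φ := by
  ext n
  rw [map_add, coeff_comp, coeff_comp, coeff_comp, ← Finset.sum_add_distrib]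
  refine Finset.sum_congr rfl fun j _ => ?_
  rw [map_add, add_mul]

lemma lemJ {Φ v w : K⟦X⟧} (hΦv : Φ = X * v) (hvw : v * w = 1) (A : K⟦X⟧) (m : ℕ) :
    coeff m (A.comp Φ * d⁄dX K Φ * w ^ (m + 1)) = coeff m A := by
  have hΦ0 : constantCoeff Φ = 0 := by rw [hΦv]; simp
  set N := m + 1 with hN
  set T : K⟦X⟧ := ∑ i ∈ range N, C (coeff i A) * X ^ i with hT
  have hcoeffT : ∀ j, j < N → coeff j T = coeff j A := by
    intro j hj
    rw [hT, map_sum]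
    simp only [coeff_C_mul, coeff_X_pow, mul_ite, mul_one, mul_zero]
    rw [Finset.sum_ite_eq (range N) j]
    simp [hj]
  obtain ⟨B, hB⟩ : (X : K⟦X⟧) ^ N ∣ A - T := by
    rw [X_pow_dvd_iff]
    intro j hj
    rw [map_sub, hcoeffT j hj, sub_self]
  have hA : A = T + X ^ N * B := by rw [← hB]; ring
  have hcompA : A.comp Φ = T.comp Φ + Φ ^ N * B.comp Φ := by
    conv_lhs => rw [hA]
    rw [comp_add, comp_mul hΦ0, comp_pow hΦ0, comp_X hΦ0]
  have hcompT : T.comp Φ = ∑ i ∈ range N, C (coeff i A) * Φ ^ i := by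
    rw [hT, comp_sum]
    refine Finset.sum_congr rfl fun i _ => ?_
    rw [comp_mul hΦ0, comp_C, comp_pow hΦ0, comp_X hΦ0]
  rw [hcompA, hcompT, add_mul, add_mul, map_add]
  have hzero : coeff m (Φ ^ N * B.comp Φ * d⁄dX K Φ * w ^ N) = 0 := by
    have e : Φ ^ N * B.comp Φ * d⁄dX K Φ * w ^ N
        = X ^ N * (v ^ N * (B.comp Φ * d⁄dX K Φ * w ^ N)) := by rw [hΦv]; ring
    rw [e, coeff_X_pow_mul', if_neg (by omega)]
  rw [hzero, add_zero, Finset.sum_mul, Finset.sum_mul, map_sum]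
  have hterm : ∀ i ∈ range N, coeff m (C (coeff i A) * Φ ^ i * d⁄dX K Φ * w ^ N)
      = coeff i A * (if i = m then 1 else 0) := by
    intro i hi
    have e : C (coeff i A) * Φ ^ i * d⁄dX K Φ * w ^ N
        = C (coeff i A) * (Φ ^ i * d⁄dX K Φ * w ^ (m + 1)) := by rw [hN]; ring
    rw [e, coeff_C_mul, Jmono hΦv hvw (by simp only [Finset.mem_range] at hi; omega)]
  rw [Finset.sum_congr rfl hterm]
  simp only [mul_ite, mul_one, mul_zero]
  rw [Finset.sum_ite_eq' (range N) m]
  simp [hN]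



end OnePth

open OnePth in
/-- The horizontal one-p-th Riordan array of `(g, f)` is the Riordan array
`(X·Φ'·g(Φ)·f(Φ)^r / Φ^{r+1}, f(Φ))`, i.e. its `(n,k)` entry is
`d_{pn+r, (p-1)n+r+k} = [X^{pn+r}](g · f^{(p-1)n+r+k})`. -/
theorem one_pth_horizontal_riordan {K : Type*} [Field K] (g f : K⟦X⟧)
    (hg : constantCoeff g ≠ 0) (hf0 : constantCoeff f = 0)
    (hf1 : coeff 1 f ≠ 0) (p r : ℕ) (hp : 1 ≤ p) (Φ : K⟦X⟧)
    (hΦ0 : constantCoeff Φ = 0) (hΦ1 : coeff 1 Φ ≠ 0)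
    (hΦ : Φ ^ p = X * (f.comp Φ) ^ (p - 1)) :
    ∃ h : K⟦X⟧,
      X * (d⁄dX K Φ) * (g.comp Φ) * (f.comp Φ) ^ r = h * Φ ^ (r + 1) ∧
      ∀ n k : ℕ,
        coeff n (h * (f.comp Φ) ^ k) =
          coeff (p * n + r) (g * f ^ ((p - 1) * n + r + k)) := by
  obtain ⟨q, rfl⟩ : ∃ q, p = q + 1 := ⟨p - 1, by omega⟩
  simp only [Nat.add_sub_cancel] at hΦ ⊢
  obtain ⟨u, hfu⟩ : (X : K⟦X⟧) ∣ f := X_dvd_iff.mpr hf0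
  have hu0 : constantCoeff u ≠ 0 := by
    intro h
    apply hf1
    rw [hfu, coeff_succ_X_mul, coeff_zero_eq_constantCoeff, h]
  set uΦ := u.comp Φ with huΦ
  have hc : constantCoeff uΦ ≠ 0 := by rw [huΦ, constantCoeff_comp hΦ0]; exact hu0
  set w : K⟦X⟧ := uΦ⁻¹ with hw
  have hvw : uΦ * w = 1 := PowerSeries.mul_inv_cancel _ hc
  have hfΦ : f.comp Φ = Φ * uΦ := by rw [hfu, comp_mul hΦ0, comp_X hΦ0]
  have hΦne : Φ ≠ 0 := fun h => hΦ1 (by rw [h]; simp)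
  have hΦX : Φ = X * uΦ ^ q := by
    refine mul_left_cancel₀ (pow_ne_zero q hΦne) ?_
    rw [hfΦ] at hΦ
    calc Φ ^ q * Φ = Φ ^ (q + 1) := by ring
      _ = X * (Φ * uΦ) ^ q := hΦ
      _ = Φ ^ q * (X * uΦ ^ q) := by ring
  set gΦ := g.comp Φ with hgΦ
  refine ⟨d⁄dX K Φ * gΦ * uΦ ^ r * w ^ q, ?_, ?_⟩
  · have hR : (d⁄dX K Φ * gΦ * uΦ ^ r * w ^ q) * Φ ^ (r + 1)
        = (X ^ (r + 1) * (d⁄dX K Φ * gΦ) * uΦ ^ ((q + 1) * r)) * (uΦ * w) ^ q := by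
      rw [hΦX]; ring
    have hL : X * d⁄dX K Φ * gΦ * (f.comp Φ) ^ r
        = X ^ (r + 1) * (d⁄dX K Φ * gΦ) * uΦ ^ ((q + 1) * r) := by
      rw [hfΦ, hΦX]; ring
    rw [hL, hR, hvw, one_pow, mul_one]
  · intro n k
    have e2 : g * f ^ (q * n + r + k) = X ^ (q * n + r + k) * (g * u ^ (q * n + r + k)) := by
      rw [hfu, mul_pow]; ring
    by_cases hkn : k ≤ n
    · obtain ⟨m, rfl⟩ : ∃ m, n = m + k := ⟨n - k, by omega⟩
      have hvq : uΦ ^ q * w ^ q = 1 := by rw [← mul_pow, hvw, one_pow]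
      have hJ := OnePth.lemJ (v := uΦ ^ q) (w := w ^ q) hΦX hvq
        (g * u ^ (q * (m + k) + r + k)) m
      rw [comp_mul hΦ0, comp_pow hΦ0, ← huΦ, ← hgΦ] at hJ
      have e1 : (d⁄dX K Φ * gΦ * uΦ ^ r * w ^ q) * (f.comp Φ) ^ k * (uΦ * w) ^ (q * m)
          = X ^ k * (gΦ * uΦ ^ (q * (m + k) + r + k) * d⁄dX K Φ * (w ^ q) ^ (m + 1)) := by
        rw [hfΦ, hΦX]; ring
      rw [hvw, one_pow, mul_one] at e1
      have e3 : (q + 1) * (m + k) + r = m + (q * (m + k) + r + k) := by ring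
      rw [e1, coeff_X_pow_mul, hJ, e2, e3, coeff_X_pow_mul]
    · have e4 : (d⁄dX K Φ * gΦ * uΦ ^ r * w ^ q) * (f.comp Φ) ^ k
          = X ^ k * (d⁄dX K Φ * gΦ * uΦ ^ (r + (q + 1) * k) * w ^ q) := by
        rw [hfΦ, hΦX]; ring
      rw [e4, coeff_X_pow_mul', if_neg hkn, e2, coeff_X_pow_mul', if_neg ?_]
      set a := q * n with ha
      have : (q + 1) * n + r = a + n + r := by rw [ha]; ring
      omega
end

section
/- Let K be a field, let f, A ∈ K⟦X⟧ with f(0) = 0, [X^1]f ≠ 0 and f = X·(A∘f), and let p ≥ 1 be an integer. Let Φ ∈ K⟦X⟧ satisfy Φ(0) = 0, [X^1]Φ ≠ 0 and Φ^p = X·(f∘Φ)^{p−1}. Then f∘Φ = X·((A^p)∘(f∘Φ)); that is, the generating function of the A-sequence of the horizontal one-p-th Riordan array of (g,f) is A^p, where A is the generating function of the A-sequence of (g,f). -/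
open PowerSeries Finset

section Aux

variable {K : Type*} [CommRing K]

lemma aux_coeff_pow_eq_zero {Φ : K⟦X⟧} (hΦ : constantCoeff Φ = 0) {n j : ℕ} (h : n < j) :
    coeff n (Φ ^ j) = 0 := by
  have : (X : K⟦X⟧) ^ j ∣ Φ ^ j := pow_dvd_pow_of_dvd (X_dvd_iff.mpr hΦ) j
  exact (X_pow_dvd_iff.mp this) n h

lemma aux_coeff_comp_congr {F F' Φ : K⟦X⟧} {n : ℕ}
    (h : ∀ j ≤ n, coeff j F = coeff j F') :
    coeff n (F.comp Φ) = coeff n (F'.comp Φ) := by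
  simp only [PowerSeries.comp, coeff_mk]
  exact Finset.sum_congr rfl fun j hj => by
    rw [h j (Nat.lt_succ_iff.mp (Finset.mem_range.mp hj))]

lemma aux_coeff_comp_eval₂ {Φ : K⟦X⟧} (hΦ : constantCoeff Φ = 0) (q : Polynomial K)
    (F : K⟦X⟧) {n : ℕ} (hq : ∀ j ≤ n, q.coeff j = coeff j F) :
    coeff n (F.comp Φ) = coeff n (Polynomial.eval₂ C Φ q) := by
  rw [Polynomial.eval₂_eq_sum, Polynomial.sum, map_sum]
  simp only [PowerSeries.comp, coeff_mk, coeff_C_mul]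
  calc ∑ j ∈ Finset.range (n + 1), coeff j F * coeff n (Φ ^ j)
      = ∑ j ∈ q.support ∪ Finset.range (n + 1), coeff j F * coeff n (Φ ^ j) :=
        Finset.sum_subset Finset.subset_union_right (fun j _ hj => by
          have hnj : n < j := by
            by_contra h; exact hj (Finset.mem_range.mpr (by omega))
          rw [aux_coeff_pow_eq_zero hΦ hnj, mul_zero])
    _ = ∑ j ∈ q.support ∪ Finset.range (n + 1), q.coeff j * coeff n (Φ ^ j) :=
        Finset.sum_congr rfl (fun j _ => by
          rcases le_or_gt j n with h | h
          · rw [hq j h]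
          · rw [aux_coeff_pow_eq_zero hΦ h, mul_zero, mul_zero])
    _ = ∑ j ∈ q.support, q.coeff j * coeff n (Φ ^ j) :=
        (Finset.sum_subset Finset.subset_union_left (fun j _ hj => by
          rw [Polynomial.notMem_support_iff.mp hj, zero_mul])).symm

lemma aux_coeff_trunc' (F : K⟦X⟧) (n : ℕ) :
    ∀ j ≤ n, (trunc (n + 1) F).coeff j = coeff j F := fun j hj => by
  rw [coeff_trunc, if_pos (Nat.lt_succ_iff.mpr hj)]

lemma aux_comp_mul {Φ : K⟦X⟧} (hΦ : constantCoeff Φ = 0) (F G : K⟦X⟧) :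
    (F * G).comp Φ = F.comp Φ * G.comp Φ := by
  ext n
  have hq := aux_coeff_trunc' F n
  have hr := aux_coeff_trunc' G n
  have hqr : ∀ j ≤ n, (trunc (n + 1) F * trunc (n + 1) G).coeff j = coeff j (F * G) := by
    intro j hj
    rw [Polynomial.coeff_mul, coeff_mul]
    refine Finset.sum_congr rfl fun kl hkl => ?_
    have hkl' := Finset.HasAntidiagonal.mem_antidiagonal.mp hkl
    rw [hq kl.1 (by omega), hr kl.2 (by omega)]
  rw [aux_coeff_comp_eval₂ hΦ _ (F * G) hqr, Polynomial.eval₂_mul, coeff_mul, coeff_mul]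
  refine Finset.sum_congr rfl fun kl hkl => ?_
  have hkl' := Finset.HasAntidiagonal.mem_antidiagonal.mp hkl
  rw [← aux_coeff_comp_eval₂ hΦ _ F (fun j hj => hq j (by omega)),
    ← aux_coeff_comp_eval₂ hΦ _ G (fun j hj => hr j (by omega))]

lemma aux_comp_C (c : K) (Φ : K⟦X⟧) : ((C c).comp Φ) = C c := by
  ext n
  simp only [PowerSeries.comp, coeff_mk, coeff_C, ite_mul, zero_mul]
  rw [Finset.sum_ite_eq' (Finset.range (n + 1)) 0 (fun j => c * coeff n (Φ ^ j)),
    if_pos (Finset.mem_range.mpr (Nat.succ_pos n)), pow_zero, coeff_one]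
  by_cases h : n = 0 <;> simp [h]

lemma aux_comp_one (Φ : K⟦X⟧) : ((1 : K⟦X⟧).comp Φ) = 1 := by
  rw [← map_one (C : K →+* K⟦X⟧), aux_comp_C, map_one]

lemma aux_comp_pow {Φ : K⟦X⟧} (hΦ : constantCoeff Φ = 0) (F : K⟦X⟧) (j : ℕ) :
    (F ^ j).comp Φ = (F.comp Φ) ^ j := by
  induction j with
  | zero => simpa using aux_comp_one Φ
  | succ j ih => rw [pow_succ, aux_comp_mul hΦ, ih, pow_succ]

lemma aux_comp_X {Φ : K⟦X⟧} (hΦ : constantCoeff Φ = 0) : (X : K⟦X⟧).comp Φ = Φ := by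
  ext n
  simp only [PowerSeries.comp, coeff_mk, coeff_X, ite_mul, one_mul, zero_mul]
  rw [Finset.sum_ite_eq' (Finset.range (n + 1)) 1 (fun j => coeff n (Φ ^ j))]
  rcases Nat.eq_zero_or_pos n with h | h
  · subst h
    simp [coeff_zero_eq_constantCoeff, hΦ]
  · rw [if_pos (Finset.mem_range.mpr (by omega)), pow_one]

lemma aux_comp_sum {ι : Type*} (s : Finset ι) (F : ι → K⟦X⟧) (Φ : K⟦X⟧) :
    (∑ i ∈ s, F i).comp Φ = ∑ i ∈ s, (F i).comp Φ := by
  ext n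
  simp only [PowerSeries.comp, coeff_mk, map_sum, Finset.sum_mul]
  exact Finset.sum_comm

lemma aux_eval₂_comp {Φ : K⟦X⟧} (hΦ : constantCoeff Φ = 0) (G : K⟦X⟧) (q : Polynomial K) :
    (Polynomial.eval₂ C G q).comp Φ = Polynomial.eval₂ C (G.comp Φ) q := by
  rw [Polynomial.eval₂_eq_sum, Polynomial.eval₂_eq_sum, Polynomial.sum, Polynomial.sum,
    aux_comp_sum]
  exact Finset.sum_congr rfl fun j _ => by
    rw [aux_comp_mul hΦ, aux_comp_C, aux_comp_pow hΦ]

lemma aux_constantCoeff_comp {F : K⟦X⟧} (Φ : K⟦X⟧) (hF : constantCoeff F = 0) :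
    constantCoeff (F.comp Φ) = 0 := by
  rw [← coeff_zero_eq_constantCoeff_apply]
  simp [PowerSeries.comp, coeff_mk, coeff_zero_eq_constantCoeff_apply, hF]

lemma aux_comp_assoc {G Φ : K⟦X⟧} (hG : constantCoeff G = 0)
    (hΦ : constantCoeff Φ = 0) (F : K⟦X⟧) :
    (F.comp G).comp Φ = F.comp (G.comp Φ) := by
  ext n
  set q := trunc (n + 1) F with hqdef
  have hq := aux_coeff_trunc' F n
  calc coeff n ((F.comp G).comp Φ)
      = coeff n ((Polynomial.eval₂ C G q).comp Φ) :=
        aux_coeff_comp_congr (fun j hj =>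
          aux_coeff_comp_eval₂ hG q F (fun i hi => hq i (by omega)))
    _ = coeff n (Polynomial.eval₂ C (G.comp Φ) q) := by
        rw [aux_eval₂_comp hΦ]
    _ = coeff n (F.comp (G.comp Φ)) :=
        (aux_coeff_comp_eval₂ (aux_constantCoeff_comp Φ hG) q F hq).symm

end Aux

/-- The generating function of the A-sequence of the horizontal one-p-th
Riordan array of `(g, f)` (whose second component is `f ∘ Φ`) is `A^p`,
where `A` is the A-sequence generating function of `(g, f)`. -/
theorem one_pth_horizontal_A_sequence {K : Type*} [Field K] (f A : K⟦X⟧)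
    (hf0 : constantCoeff f = 0) (hf1 : coeff 1 f ≠ 0)
    (hA : f = X * A.comp f) (p : ℕ) (hp : 1 ≤ p) (Φ : K⟦X⟧)
    (hΦ0 : constantCoeff Φ = 0) (hΦ1 : coeff 1 Φ ≠ 0)
    (hΦ : Φ ^ p = X * (f.comp Φ) ^ (p - 1)) :
    f.comp Φ = X * (A ^ p).comp (f.comp Φ) := by
  set ψ := f.comp Φ with hψdef
  have hψ0 : constantCoeff ψ = 0 := aux_constantCoeff_comp Φ hf0
  have hψ1 : coeff 1 ψ ≠ 0 := by
    have : coeff 1 ψ = coeff 1 f * coeff 1 Φ := by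
      have h0 : coeff 0 f = 0 := by
        rwa [coeff_zero_eq_constantCoeff_apply]
      simp [hψdef, PowerSeries.comp, coeff_mk, Finset.sum_range_succ, h0, coeff_one]
    rw [this]
    exact mul_ne_zero hf1 hΦ1
  have hψne : ψ ≠ 0 := fun h => hψ1 (by rw [h]; simp)
  have step1 : ψ = Φ * A.comp ψ := by
    calc ψ = (X * A.comp f).comp Φ := congrArg (fun g => PowerSeries.comp g Φ) hA
      _ = (X : K⟦X⟧).comp Φ * (A.comp f).comp Φ := aux_comp_mul hΦ0 _ _
      _ = Φ * A.comp ψ := by rw [aux_comp_X hΦ0, aux_comp_assoc hf0 hΦ0]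
  have hcancel : ψ * ψ ^ (p - 1) = (X * (A.comp ψ) ^ p) * ψ ^ (p - 1) := by
    have hpow : ψ ^ p = ψ * ψ ^ (p - 1) := by
      conv_lhs => rw [show p = 1 + (p - 1) by omega]
      rw [pow_add, pow_one]
    calc ψ * ψ ^ (p - 1) = ψ ^ p := hpow.symm
      _ = Φ ^ p * (A.comp ψ) ^ p := by rw [← mul_pow, ← step1]
      _ = (X * ψ ^ (p - 1)) * (A.comp ψ) ^ p := by rw [hΦ]
      _ = (X * (A.comp ψ) ^ p) * ψ ^ (p - 1) := by ring
  have hkey : ψ = X * (A.comp ψ) ^ p :=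
    mul_right_cancel₀ (pow_ne_zero _ hψne) hcancel
  rw [aux_comp_pow hψ0]
  exact hkey
end

section
/- For all integers p ≥ 1, r ≥ 0 and 0 ≤ k ≤ n, the binomial coefficients satisfy C(p(n+1)+r, (p−1)(n+1)+r+k+1) = Σ_{j=0}^{n−k} C(p,j) · C(pn+r, (p−1)n+r+k+j). -/
theorem aux_vandermonde (p c d : ℕ) :
    (p + c + d).choose (p + c) =
      ∑ j ∈ Finset.range (d + 1), p.choose j * (c + d).choose (c + j) := by
  rw [← Nat.choose_symm (show p + c ≤ p + c + d by omega),
    show p + c + d - (p + c) = d by omega,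
    show p + c + d = p + (c + d) by ring, Nat.add_choose_eq,
    Finset.Nat.sum_antidiagonal_eq_sum_range_succ
      (fun i j => p.choose i * (c + d).choose j)]
  refine Finset.sum_congr rfl fun j hj => ?_
  simp only [Finset.mem_range] at hj
  have h : d - j ≤ c + d := by omega
  rw [← Nat.choose_symm h, show c + d - (d - j) = c + j by omega]

/-- The A-sequence recurrence of the horizontal one-p-th Riordan array of the
Pascal matrix: `C(p(n+1)+r, (p-1)(n+1)+r+k+1)
= Σ_{j=0}^{n-k} C(p,j)·C(pn+r, (p-1)n+r+k+j)`. -/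
theorem one_pth_pascal_identity (p r n k : ℕ) (hp : 1 ≤ p) (hkn : k ≤ n) :
    Nat.choose (p * (n + 1) + r) ((p - 1) * (n + 1) + r + k + 1) =
      ∑ j ∈ Finset.range (n - k + 1),
        Nat.choose p j * Nat.choose (p * n + r) ((p - 1) * n + r + k + j) := by
  obtain ⟨q, rfl⟩ : ∃ q, p = q + 1 := ⟨p - 1, by omega⟩
  have h1 : (q + 1) * (n + 1) + r = (q + 1) + (q * n + r + k) + (n - k) := by
    have : (q + 1) * (n + 1) = q * n + q + n + 1 := by ring
    omega
  have h2 : (q + 1 - 1) * (n + 1) + r + k + 1 = (q + 1) + (q * n + r + k) := by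
    simp only [Nat.add_sub_cancel]
    have : q * (n + 1) = q * n + q := by ring
    omega
  have h3 : (q + 1) * n + r = (q * n + r + k) + (n - k) := by
    have : (q + 1) * n = q * n + n := by ring
    omega
  have h4 : (q + 1 - 1) * n = q * n := by simp
  rw [h1, h2, h3, h4, aux_vandermonde]
end

section
/- Let p ≥ 1, r ≥ 0 and 0 ≤ k ≤ n be integers with (p−1)·n + r + k ≥ 1, and write F_m = fib(m+1) (so F_0 = F_1 = 1, F_2 = 2, ...). Then in ℚ: Σ_{j=0}^{n−k} F_{n−k−j} · (((p−1)(n+1)+r+k+1)/(2j+(p−1)(n+1)+r+k+1)) · C(2j+(p−1)(n+1)+r+k+1, j) = Σ_{i=0}^{n−k} C(p+i−1, i) · Σ_{j=0}^{n−k−i} F_{n−k−i−j} · (((p−1)n+r+k+i)/(2j+(p−1)n+r+k+i)) · C(2j+(p−1)n+r+k+i, j). -/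
open Finset

noncomputable def Bq (m j : ℕ) : ℚ := (m : ℚ) / (2*j + m) * (Nat.choose (2*j+m) j)

lemma Bq_zero (j : ℕ) : Bq 0 j = 0 := by simp [Bq]

lemma Bq_j_zero (m : ℕ) (hm : 1 ≤ m) : Bq m 0 = 1 := by
  have : (m:ℚ) ≠ 0 := by exact_mod_cast (by omega : m ≠ 0)
  simp [Bq, this]

lemma Bq_rec (m j : ℕ) : Bq (m+1) (j+1) = Bq m (j+1) + Bq (m+2) j := by
  have hpas : Nat.choose (2*j+m+3) (j+1)
      = Nat.choose (2*j+m+2) j + Nat.choose (2*j+m+2) (j+1) := by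
    have h := Nat.choose_succ_succ (2*j+m+2) j
    have e : 2*j+m+2+1 = 2*j+m+3 := by omega
    simpa [Nat.succ_eq_add_one, e] using h
  have hrel : (Nat.choose (2*j+m+2) (j+1)) * (j+1)
      = (Nat.choose (2*j+m+2) j) * (j+m+2) := by
    have h := Nat.choose_succ_right_eq (2*j+m+2) j
    rw [h]; congr 1; omega
  have hrelQ : ((Nat.choose (2*j+m+2) (j+1) : ℚ)) * (j+1)
      = ((Nat.choose (2*j+m+2) j : ℚ)) * (j+m+2) := by exact_mod_cast hrel
  unfold Bq
  have e1 : 2*(j+1) + (m+1) = 2*j+m+3 := by omega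
  have e2 : 2*(j+1) + m = 2*j+m+2 := by omega
  have e3 : 2*j + (m+2) = 2*j+m+2 := by omega
  rw [e1, e2, e3, hpas]
  have d1 : ((2*j+m+3 : ℕ) : ℚ) ≠ 0 := by positivity
  have d2 : ((2*j+m+2 : ℕ) : ℚ) ≠ 0 := by positivity
  push_cast
  push_cast at hrelQ
  field_simp
  linear_combination (2*(m:ℚ)+4*(j:ℚ)+4) * hrelQ

lemma Bq_key : ∀ p : ℕ, ∀ j M : ℕ,
    Bq (M+1+p) j = ∑ i ∈ range (j+1), (Nat.choose (p+i-1) i : ℚ) * Bq (M+1+i) (j-i) := by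
  intro p
  induction p with
  | zero =>
    intro j M
    rw [Finset.sum_eq_single 0]
    · simp
    · intro i hi hi0
      have : Nat.choose (i-1) i = 0 := Nat.choose_eq_zero_of_lt (by omega)
      simp [this]
    · simp
  | succ p ih =>
    intro j
    induction j with
    | zero =>
      intro M
      rw [Bq_j_zero (M+1+(p+1)) (by omega), Finset.sum_range_one]
      norm_num [Bq_j_zero (M+1) (by omega)]
    | succ j ihj =>
      intro M
      rw [Finset.sum_range_succ'
        (fun i => (Nat.choose (p+1+i-1) i : ℚ) * Bq (M+1+i) (j+1-i)) (j+1)]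
      have hterm : ∀ i ∈ range (j+1),
          (Nat.choose (p+1+(i+1)-1) (i+1) : ℚ) * Bq (M+1+(i+1)) (j+1-(i+1))
          = (Nat.choose (p+i) (i+1) : ℚ) * Bq (M+2+i) (j-i)
            + (Nat.choose (p+i) i : ℚ) * Bq (M+2+i) (j-i) := by
        intro i _
        have e1 : p+1+(i+1)-1 = p+i+1 := by omega
        have e2 : M+1+(i+1) = M+2+i := by omega
        have e3 : j+1-(i+1) = j-i := by omega
        have hp2 : Nat.choose (p+i+1) (i+1) = Nat.choose (p+i) i + Nat.choose (p+i) (i+1) :=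
          Nat.choose_succ_succ (p+i) i
        rw [e1, e2, e3, hp2]
        push_cast
        ring
      rw [Finset.sum_congr rfl hterm, Finset.sum_add_distrib]
      have hsum2 : ∑ i ∈ range (j+1), (Nat.choose (p+i) i : ℚ) * Bq (M+2+i) (j-i)
          = Bq (M+p+3) j := by
        have h := ihj (M+1)
        rw [show M+1+1+(p+1) = M+p+3 by omega] at h
        rw [h]
        apply Finset.sum_congr rfl
        intro i _
        rw [show p+1+i-1 = p+i by omega, show M+1+1+i = M+2+i by omega]
      have hsum1 : (∑ i ∈ range (j+1), (Nat.choose (p+i) (i+1) : ℚ) * Bq (M+2+i) (j-i))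
            + (Nat.choose (p+1+0-1) 0 : ℚ) * Bq (M+1+0) (j+1-0)
          = Bq (M+1+p) (j+1) := by
        have hih := ih (j+1) M
        rw [Finset.sum_range_succ'
          (fun i => (Nat.choose (p+i-1) i : ℚ) * Bq (M+1+i) (j+1-i)) (j+1)] at hih
        rw [hih]
        congr 1
        · apply Finset.sum_congr rfl
          intro i _
          rw [show p+(i+1)-1 = p+i by omega, show M+1+(i+1) = M+2+i by omega,
            show j+1-(i+1) = j-i by omega]
        · simp
      have hrec : Bq (M+1+(p+1)) (j+1) = Bq (M+1+p) (j+1) + Bq (M+p+3) j := by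
        rw [show M+1+(p+1) = (M+1+p)+1 by omega, show M+p+3 = (M+1+p)+2 by omega]
        exact Bq_rec (M+1+p) j
      rw [hrec, ← hsum1, ← hsum2]
      ring

lemma tri_swap (N : ℕ) (f : ℕ → ℕ → ℚ) :
    ∑ i ∈ range (N+1), ∑ j ∈ range (N-i+1), f i j
      = ∑ s ∈ range (N+1), ∑ i ∈ range (s+1), f i (s-i) := by
  rw [Finset.sum_sigma', Finset.sum_sigma']
  apply Finset.sum_nbij' (fun x => (⟨x.1 + x.2, x.1⟩ : (_ : ℕ) × ℕ))
    (fun x => (⟨x.2, x.1 - x.2⟩ : (_ : ℕ) × ℕ))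
  · rintro ⟨a, b⟩ hx
    simp only [Finset.mem_sigma, Finset.mem_range] at hx ⊢
    omega
  · rintro ⟨a, b⟩ hx
    simp only [Finset.mem_sigma, Finset.mem_range] at hx ⊢
    omega
  · rintro ⟨a, b⟩ hx
    simp only [Finset.mem_sigma, Finset.mem_range] at hx
    have : a + b - a = b := by omega
    simp only [this]
  · rintro ⟨a, b⟩ hx
    simp only [Finset.mem_sigma, Finset.mem_range] at hx
    have : b + (a - b) = a := by omega
    simp only [this]
  · rintro ⟨a, b⟩ hx
    simp only [Finset.mem_sigma, Finset.mem_range] at hx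
    have : a + b - a = b := by omega
    simp only [this]

/-- The A-sequence recurrence of the one-p-th horizontal array of the Riordan
array `(1/(1-X-X²), X·C(X))`, where `C(X)` is the Catalan generating function
and `F_m = fib(m+1)`. -/
theorem one_pth_fibonacci_catalan_identity (p r n k : ℕ) (hp : 1 ≤ p) (hkn : k ≤ n)
    (h1 : 1 ≤ (p - 1) * n + r + k) :
    ∑ j ∈ Finset.range (n - k + 1),
        (Nat.fib (n - k - j + 1) : ℚ) *
          (((p - 1) * (n + 1) + r + k + 1 : ℕ) : ℚ) /
            ((2 * j + (p - 1) * (n + 1) + r + k + 1 : ℕ) : ℚ) *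
          (Nat.choose (2 * j + (p - 1) * (n + 1) + r + k + 1) j : ℚ) =
      ∑ i ∈ Finset.range (n - k + 1),
        (Nat.choose (p + i - 1) i : ℚ) *
          ∑ j ∈ Finset.range (n - k - i + 1),
            (Nat.fib (n - k - i - j + 1) : ℚ) *
              (((p - 1) * n + r + k + i : ℕ) : ℚ) /
                ((2 * j + (p - 1) * n + r + k + i : ℕ) : ℚ) *
              (Nat.choose (2 * j + (p - 1) * n + r + k + i) j : ℚ) := by
  obtain ⟨q, rfl⟩ : ∃ q, p = q + 1 := ⟨p - 1, by omega⟩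
  simp only [Nat.add_sub_cancel] at h1 ⊢
  have hmul : q * (n + 1) = q * n + q := by ring
  rw [hmul]
  set Q := q * n with hQ
  obtain ⟨M, hM⟩ : ∃ M, Q + r + k = M + 1 := ⟨Q + r + k - 1, by omega⟩
  trans (∑ j ∈ Finset.range (n - k + 1), (Nat.fib (n - k - j + 1) : ℚ) * Bq (M+1+(q+1)) j)
  · apply Finset.sum_congr rfl
    intro j hj
    have e1 : Q + q + r + k + 1 = M + 1 + (q + 1) := by omega
    have e2 : 2 * j + (Q + q) + r + k + 1 = 2 * j + (M + 1 + (q + 1)) := by omega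
    rw [e1, e2]
    simp only [Bq]
    push_cast
    ring
  · symm
    calc ∑ i ∈ Finset.range (n - k + 1),
            (Nat.choose (q + 1 + i - 1) i : ℚ) *
              ∑ j ∈ Finset.range (n - k - i + 1),
                (Nat.fib (n - k - i - j + 1) : ℚ) * ((Q + r + k + i : ℕ) : ℚ) /
                    ((2 * j + Q + r + k + i : ℕ) : ℚ) *
                  (Nat.choose (2 * j + Q + r + k + i) j : ℚ)
        = ∑ i ∈ Finset.range (n - k + 1), ∑ j ∈ Finset.range (n - k - i + 1),
            (Nat.choose (q + 1 + i - 1) i : ℚ) *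
              ((Nat.fib (n - k - i - j + 1) : ℚ) * Bq (M + 1 + i) j) := by
          apply Finset.sum_congr rfl
          intro i hi
          rw [Finset.mul_sum]
          apply Finset.sum_congr rfl
          intro j hj
          have e1 : Q + r + k + i = M + 1 + i := by omega
          have e2 : 2 * j + Q + r + k + i = 2 * j + (M + 1 + i) := by omega
          rw [e1, e2]
          simp only [Bq]
          push_cast
          ring
      _ = ∑ s ∈ Finset.range (n - k + 1), ∑ i ∈ Finset.range (s + 1),
            (Nat.choose (q + 1 + i - 1) i : ℚ) *
              ((Nat.fib (n - k - i - (s - i) + 1) : ℚ) * Bq (M + 1 + i) (s - i)) :=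
          tri_swap (n - k) (fun i j => (Nat.choose (q + 1 + i - 1) i : ℚ) *
              ((Nat.fib (n - k - i - j + 1) : ℚ) * Bq (M + 1 + i) j))
      _ = ∑ s ∈ Finset.range (n - k + 1),
            (Nat.fib (n - k - s + 1) : ℚ) * Bq (M+1+(q+1)) s := by
          apply Finset.sum_congr rfl
          intro s hs
          rw [Bq_key (q+1) s M, Finset.mul_sum]
          apply Finset.sum_congr rfl
          intro i hi
          simp only [Finset.mem_range] at hi
          rw [show n - k - i - (s - i) = n - k - s by omega]
          ring
end

section
/- For all integers p ≥ 1, r ≥ 0 and 0 ≤ k ≤ n, the following identity holds in ℚ: (((p−1)(n+1)+r+k+2)/((p+1)(n+1)+r−k)) · C((p+1)(n+1)+r−k, n−k) = Σ_{j=0}^{n−k} (((p−1)n+r+k+j+1)/((p+1)n+r+1−k−j)) · C(p+j−1, j) · C((p+1)n+r+1−k−j, n−k−j). -/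
lemma hockey (d : ℕ) : ∀ m : ℕ, ∑ j ∈ Finset.range (m+1), (d + j).choose j = (d + m + 1).choose m := by
  intro m
  induction m with
  | zero => simp
  | succ m ih =>
    rw [Finset.sum_range_succ, ih, show d + (m+1) = d + m + 1 from by omega]
    have h := Nat.choose_succ_succ (d+m+1) m
    simp only [Nat.succ_eq_add_one] at h
    omega

lemma vand : ∀ (m c d : ℕ), ∑ i ∈ Finset.range (m+1), (c+i).choose i * (d + (m-i)).choose (m-i)
    = (c+d+m+1).choose m := by
  intro m
  induction m with
  | zero => intro c d; simp
  | succ m ih =>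
    intro c
    induction c with
    | zero =>
      intro d
      have e : ∑ i ∈ Finset.range (m+2), (0+i).choose i * (d + (m+1-i)).choose (m+1-i)
          = ∑ i ∈ Finset.range (m+2), (d + (m+2-1-i)).choose (m+2-1-i) := by
        apply Finset.sum_congr rfl; intro i _
        rw [Nat.zero_add, Nat.choose_self, Nat.one_mul]
        congr 1 <;> omega
      rw [e, Finset.sum_range_reflect (fun j => (d + j).choose j) (m+2), hockey d (m+1),
        Nat.zero_add]
    | succ c ihc =>
      intro d
      have term : ∀ i, (c+1+(i+1)).choose (i+1) * (d + (m+1-(i+1))).choose (m+1-(i+1))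
          = (c+(i+1)).choose (i+1) * (d + (m+1-(i+1))).choose (m+1-(i+1))
            + (c+1+i).choose i * (d + (m-i)).choose (m-i) := by
        intro i
        rw [Nat.succ_sub_succ, show c+1+(i+1) = (c+(i+1)) + 1 from by omega,
            show c+1+i = c+(i+1) from by omega]
        have h := Nat.choose_succ_succ (c+(i+1)) i
        simp only [Nat.succ_eq_add_one] at h
        rw [h, Nat.add_mul]
        omega
      have step1 : ∑ i ∈ Finset.range (m+2), (c+1+i).choose i * (d + (m+1-i)).choose (m+1-i)
          = (∑ i ∈ Finset.range (m+2), (c+i).choose i * (d + (m+1-i)).choose (m+1-i))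
            + ∑ i ∈ Finset.range (m+1), (c+1+i).choose i * (d + (m-i)).choose (m-i) := by
        calc ∑ i ∈ Finset.range (m+2), (c+1+i).choose i * (d + (m+1-i)).choose (m+1-i)
            = (∑ i ∈ Finset.range (m+1), (c+1+(i+1)).choose (i+1) * (d + (m+1-(i+1))).choose (m+1-(i+1)))
              + (c+1+0).choose 0 * (d + (m+1-0)).choose (m+1-0) :=
              Finset.sum_range_succ' _ (m+1)
          _ = (∑ i ∈ Finset.range (m+1),
                ((c+(i+1)).choose (i+1) * (d + (m+1-(i+1))).choose (m+1-(i+1))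
                  + (c+1+i).choose i * (d + (m-i)).choose (m-i)))
              + (c+0).choose 0 * (d + (m+1-0)).choose (m+1-0) := by
              rw [Finset.sum_congr rfl (fun i _ => term i)]; norm_num
          _ = ((∑ i ∈ Finset.range (m+1), (c+(i+1)).choose (i+1) * (d + (m+1-(i+1))).choose (m+1-(i+1)))
              + (c+0).choose 0 * (d + (m+1-0)).choose (m+1-0))
              + ∑ i ∈ Finset.range (m+1), (c+1+i).choose i * (d + (m-i)).choose (m-i) := by
              rw [Finset.sum_add_distrib]; omega
          _ = (∑ i ∈ Finset.range (m+2), (c+i).choose i * (d + (m+1-i)).choose (m+1-i))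
              + ∑ i ∈ Finset.range (m+1), (c+1+i).choose i * (d + (m-i)).choose (m-i) := by
              rw [← Finset.sum_range_succ' (fun i => (c+i).choose i * (d + (m+1-i)).choose (m+1-i)) (m+1)]
      rw [step1, ihc d, ih (c+1) d]
      have P := Nat.choose_succ_succ (c+d+m+2) m
      simp only [Nat.succ_eq_add_one] at P
      rw [show c+d+(m+1)+1 = c+d+m+2 from by omega, show c+1+d+m+1 = c+d+m+2 from by omega,
          show c+1+d+(m+1)+1 = c+d+m+2+1 from by omega]
      omega


lemma ballot_split (c i : ℕ) (h : i + 1 ≤ c) :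
    ((c - (i+1) : ℕ) : ℚ) / ((c + (i+1) : ℕ) : ℚ) * ((c + (i+1)).choose (i+1) : ℚ)
      = ((c + (i+1)).choose (i+1) : ℚ) - 2 * ((c + i).choose i : ℚ) := by
  have key : (c + i + 1) * (c + i).choose i = (c + i + 1).choose (i + 1) * (i + 1) := by
    have := Nat.add_one_mul_choose_eq (c + i) i
    simpa [Nat.succ_eq_add_one] using this
  have hkey : ((c : ℚ) + i + 1) * ((c + i).choose i : ℚ) = ((c + i + 1).choose (i+1) : ℚ) * ((i : ℚ) + 1) := by
    exact_mod_cast key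
  have hne : ((c : ℚ) + (i + 1)) ≠ 0 := by positivity
  have hcast : ((c - (i+1) : ℕ) : ℚ) = (c : ℚ) - ((i : ℚ) + 1) := by
    push_cast [Nat.cast_sub h]; ring
  have hch : ((c + (i+1)).choose (i+1) : ℚ) = ((c + i + 1).choose (i+1) : ℚ) := by rfl
  rw [hcast, hch]
  push_cast
  field_simp
  linear_combination 2 * hkey

lemma clean (q c m : ℕ) (hc : m + 1 ≤ c) :
    ((c + q + 1 - m : ℕ) : ℚ) / ((c + q + 1 + m : ℕ) : ℚ) * ((c + q + 1 + m).choose m : ℚ)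
    = ∑ i ∈ Finset.range (m+1),
        ((c - i : ℕ) : ℚ) / ((c + i : ℕ) : ℚ) * ((q + (m - i)).choose (m - i) : ℚ)
          * ((c + i).choose i : ℚ) := by
  have hc0 : ((c : ℕ) : ℚ) ≠ 0 := by
    have : 0 < c := by omega
    positivity
  rcases m with _ | m
  · rw [Finset.sum_range_one]
    simp only [Nat.sub_zero, Nat.add_zero, Nat.choose_zero_right, Nat.cast_one, mul_one]
    rw [div_self hc0, div_self (by positivity : ((c + q + 1 : ℕ) : ℚ) ≠ 0)]
  · -- m+1 case
    -- RHS manipulation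
    have hterm : ∀ i ∈ Finset.range (m+1),
        ((c - (i+1) : ℕ) : ℚ) / ((c + (i+1) : ℕ) : ℚ)
            * ((q + (m + 1 - (i+1))).choose (m + 1 - (i+1)) : ℚ) * ((c + (i+1)).choose (i+1) : ℚ)
        = (((c + (i+1)).choose (i+1) : ℚ) - 2 * ((c + i).choose i : ℚ))
            * ((q + (m - i)).choose (m - i) : ℚ) := by
      intro i hi
      simp only [Finset.mem_range] at hi
      rw [show m + 1 - (i+1) = m - i from by omega]
      rw [mul_right_comm, ballot_split c i (by omega)]
    rw [Finset.sum_range_succ']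
    rw [Finset.sum_congr rfl hterm]
    simp only [Nat.sub_zero, Nat.add_zero, Nat.choose_zero_right, Nat.cast_one, mul_one,
      div_self hc0, one_mul]
    -- now RHS = ∑ (A i - 2*B i) * C i + ((q+(m+1)).choose (m+1) : ℚ)
    have hA_nat : (∑ i ∈ Finset.range (m+1), (c+(i+1)).choose (i+1) * (q+(m-i)).choose (m-i))
        + (q+(m+1)).choose (m+1) = (c+q+(m+1)+1).choose (m+1) := by
      have h1 := vand (m+1) c q
      rw [Finset.sum_range_succ' (fun i => (c+i).choose i * (q+(m+1-i)).choose (m+1-i)) (m+1)] at h1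
      have e : ∀ i ∈ Finset.range (m+1),
          (c+(i+1)).choose (i+1) * (q + (m+1-(i+1))).choose (m+1-(i+1))
          = (c+(i+1)).choose (i+1) * (q+(m-i)).choose (m-i) := by
        intro i _
        rw [show m + 1 - (i+1) = m - i from by omega]
      rw [Finset.sum_congr rfl e] at h1
      simpa using h1
    have hB_nat := vand m c q
    have expand : ∑ i ∈ Finset.range (m+1),
        ((((c + (i+1)).choose (i+1) : ℚ) - 2 * ((c + i).choose i : ℚ))
          * ((q + (m - i)).choose (m - i) : ℚ))
        = (∑ i ∈ Finset.range (m+1),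
            (((c+(i+1)).choose (i+1) * (q+(m-i)).choose (m-i) : ℕ) : ℚ))
          - 2 * ∑ i ∈ Finset.range (m+1), (((c+i).choose i * (q+(m-i)).choose (m-i) : ℕ) : ℚ) := by
      rw [Finset.mul_sum, ← Finset.sum_sub_distrib]
      apply Finset.sum_congr rfl
      intro i _
      push_cast
      ring
    rw [expand]
    have cA : (∑ i ∈ Finset.range (m+1),
        (((c+(i+1)).choose (i+1) * (q+(m-i)).choose (m-i) : ℕ) : ℚ))
        = ((c+q+(m+1)+1).choose (m+1) : ℚ) - ((q+(m+1)).choose (m+1) : ℚ) := by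
      rw [← Nat.cast_sum]
      rw [eq_sub_iff_add_eq, ← Nat.cast_add, hA_nat]
    have cB : (∑ i ∈ Finset.range (m+1), (((c+i).choose i * (q+(m-i)).choose (m-i) : ℕ) : ℚ))
        = ((c+q+m+1).choose m : ℚ) := by
      rw [← Nat.cast_sum, hB_nat]
    rw [cA, cB]
    -- LHS via ballot_split
    rw [ballot_split (c+q+1) m (by omega)]
    rw [show c+q+1+(m+1) = c+q+(m+1)+1 from by omega, show c+q+1+m = c+q+m+1 from by omega]
    ring


/-- The A-sequence recurrence of the one-p-th horizontal array of the Riordan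
array `(C(X), X·C(X))` built from the Catalan generating function. -/
theorem one_pth_ballot_identity (p r n k : ℕ) (hp : 1 ≤ p) (hkn : k ≤ n) :
    (((p - 1) * (n + 1) + r + k + 2 : ℕ) : ℚ) /
        (((p + 1) * (n + 1) + r - k : ℕ) : ℚ) *
      (Nat.choose ((p + 1) * (n + 1) + r - k) (n - k) : ℚ) =
      ∑ j ∈ Finset.range (n - k + 1),
        (((p - 1) * n + r + k + j + 1 : ℕ) : ℚ) /
            (((p + 1) * n + r + 1 - k - j : ℕ) : ℚ) *
          (Nat.choose (p + j - 1) j : ℚ) *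
          (Nat.choose ((p + 1) * n + r + 1 - k - j) (n - k - j) : ℚ) := by
  obtain ⟨q, rfl⟩ : ∃ q, p = q + 1 := ⟨p - 1, by omega⟩
  have hn : (q + 1) * n = q * n + n := by ring
  have key := clean q ((q+1)*n + r + 1) (n - k) (by omega)
  rw [← Finset.sum_range_reflect] at key
  rw [show (q+1-1)*(n+1)+r+k+2 = (q+1)*n+r+1+q+1-(n-k) from by
        simp only [Nat.add_sub_cancel, Nat.add_mul, Nat.mul_add, Nat.mul_one, Nat.one_mul]; omega,
      show (q+1+1)*(n+1)+r-k = (q+1)*n+r+1+q+1+(n-k) from by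
        simp only [Nat.add_sub_cancel, Nat.add_mul, Nat.mul_add, Nat.mul_one, Nat.one_mul]; omega,
      key]
  apply Finset.sum_congr rfl
  intro j hj
  simp only [Finset.mem_range] at hj
  rw [show n-k+1-1-j = n-k-j from by omega,
      show n-k-(n-k-j) = j from by omega,
      show (q+1-1)*n+r+k+j+1 = (q+1)*n+r+1 - (n-k-j) from by
        simp only [Nat.add_sub_cancel, Nat.add_mul, Nat.mul_add, Nat.mul_one, Nat.one_mul]; omega,
      show (q+1+1)*n+r+1-k-j = (q+1)*n+r+1 + (n-k-j) from by
        simp only [Nat.add_sub_cancel, Nat.add_mul, Nat.mul_add, Nat.mul_one, Nat.one_mul]; omega,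
      show q+1+j-1 = q+j from by omega]
end

section
/- Let p ≥ 1 and r ≥ 0 be integers and let w ∈ ℚ⟦X⟧ satisfy w(0) = 0 and w = X·(1+w)^p. Then for every n ≥ 0, the n-th coefficient of (1+w)^{r+1} · (1 − (p−1)·w)⁻¹ equals the binomial coefficient C(pn+r, n). -/
open PowerSeries

private lemma one_pth_keyQ (q m : ℕ) :
    ((m:ℚ)+2) * Nat.choose ((q+1)*(m+1)+q) (m+1)
      = Nat.choose ((q+1)*(m+1)+q+1) (m+1) + ((m:ℚ)+2)*q*Nat.choose ((q+1)*(m+1)+q) m := by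
  have h1 := Nat.choose_succ_succ' ((q+1)*(m+1)+q) m
  have h2 := Nat.choose_succ_right_eq ((q+1)*(m+1)+q) m
  have h3 : (q+1)*(m+1)+q - m = q*(m+2)+1 := by
    rw [show (q+1)*(m+1)+q = q*(m+2)+1+m by ring]
    omega
  rw [h3] at h2
  have h1' : ((((q+1)*(m+1)+q+1).choose (m+1) : ℕ) : ℚ)
      = (((q+1)*(m+1)+q).choose m : ℚ) + (((q+1)*(m+1)+q).choose (m+1) : ℚ) := by
    exact_mod_cast congrArg (Nat.cast : ℕ → ℚ) h1
  have h2' : ((((q+1)*(m+1)+q).choose (m+1) : ℕ) : ℚ) * (m+1)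
      = (((q+1)*(m+1)+q).choose m : ℚ) * (q*(m+2)+1) := by
    exact_mod_cast congrArg (Nat.cast : ℕ → ℚ) h2
  linear_combination h2' - h1'

/-- The first component of the one-p-th horizontal Riordan array of the Pascal
matrix: if `w = X·(1+w)^p` then `[Xⁿ]((1+w)^{r+1}/(1-(p-1)w)) = C(pn+r, n)`. -/
theorem one_pth_pascal_g (p r : ℕ) (hp : 1 ≤ p) (w : ℚ⟦X⟧)
    (hw0 : constantCoeff w = 0) (hw : w = X * (1 + w) ^ p) :
    ∀ n : ℕ,
      coeff n ((1 + w) ^ (r + 1) * (1 - ((p - 1 : ℕ) : ℚ⟦X⟧) * w)⁻¹) =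
        (Nat.choose (p * n + r) n : ℚ) := by
  obtain ⟨q, rfl⟩ : ∃ q, p = q + 1 := ⟨p - 1, by omega⟩
  have hc : ((q + 1 - 1 : ℕ) : ℚ⟦X⟧) = (q : ℚ⟦X⟧) := by norm_num
  rw [hc]
  -- notation
  set B : ℚ⟦X⟧ := 1 + w with hB
  -- invertibility of D = 1 - q w
  have hD0 : constantCoeff (1 - (q : ℚ⟦X⟧) * w) ≠ 0 := by
    simp [hw0]
  have hDinv : (1 - (q : ℚ⟦X⟧) * w) * (1 - (q : ℚ⟦X⟧) * w)⁻¹ = 1 :=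
    PowerSeries.mul_inv_cancel _ hD0
  -- derivative relation
  have hder : (d⁄dX ℚ) w * (1 - (q : ℚ⟦X⟧) * w) = B ^ (q+2) := by
    have hdw : d⁄dX ℚ w = B^(q+1) + X * (((q:ℚ⟦X⟧)+1) * (B^q * d⁄dX ℚ w)) := by
      conv_lhs => rw [hw]
      rw [Derivation.leibniz, Derivation.leibniz_pow, derivative_X]
      have hB' : d⁄dX ℚ B = d⁄dX ℚ w := by
        rw [hB, map_add, Derivation.map_one_eq_zero, zero_add]
      rw [hB']
      simp only [smul_eq_mul, nsmul_eq_mul, Nat.add_sub_cancel, mul_one]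
      push_cast
      ring
    rw [hB] at *
    linear_combination (1+w) * hdw - ((q:ℚ⟦X⟧)+1) * (d⁄dX ℚ w) * hw
  have hu : B ^ (q+2) * (1 - (q : ℚ⟦X⟧) * w)⁻¹ = d⁄dX ℚ w := by
    rw [← hder, mul_assoc, hDinv, mul_one]
  -- expansion of B^(q+1)
  have hBp : B^(q+1)
      = B^(q+1) * (1 - (q : ℚ⟦X⟧) * w)⁻¹
        - (q:ℚ⟦X⟧) * (X * (B^(2*q+1+1) * (1 - (q : ℚ⟦X⟧) * w)⁻¹)) := by
    rw [hB] at *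
    linear_combination (-((1+w)^(q+1))) * hDinv
      + (-(q:ℚ⟦X⟧) * (1+w)^(q+1) * (1 - (q : ℚ⟦X⟧) * w)⁻¹) * hw
  -- natCast multiplication under coeff
  have hqmul : ∀ (j : ℕ) (f : ℚ⟦X⟧),
      coeff j ((q:ℚ⟦X⟧) * f) = (q:ℚ) * coeff j f := by
    intro j f
    rw [← map_natCast C q, coeff_C_mul]
  -- main claim
  have main : ∀ n k : ℕ,
      coeff n (B ^ (k+1) * (1 - (q : ℚ⟦X⟧) * w)⁻¹)
        = (((q+1)*n + k).choose n : ℚ) := by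
    intro n
    induction n using Nat.strong_induction_on with
    | _ n ih =>
      match n with
      | 0 =>
        intro k
        simp [coeff_zero_eq_constantCoeff, map_mul, map_pow, hB, hw0,
          PowerSeries.constantCoeff_inv]
      | (m+1) =>
        -- step relation
        have hpow : ∀ k : ℕ, B^(k+1+1) * (1 - (q : ℚ⟦X⟧) * w)⁻¹
            = B^(k+1) * (1 - (q : ℚ⟦X⟧) * w)⁻¹
              + X * (B^(k+q+1+1) * (1 - (q : ℚ⟦X⟧) * w)⁻¹) := by
          intro k
          have hBrec : B = 1 + X * B^(q+1) := by rw [hB, ← hw]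
          calc B^(k+1+1) * (1 - (q : ℚ⟦X⟧) * w)⁻¹
              = (B^(k+1) * (1 - (q : ℚ⟦X⟧) * w)⁻¹) * B := by ring
            _ = (B^(k+1) * (1 - (q : ℚ⟦X⟧) * w)⁻¹) * (1 + X * B^(q+1)) := by
                rw [← hBrec]
            _ = _ := by ring
        have hstep : ∀ k : ℕ,
            coeff (m+1) (B^(k+1+1) * (1 - (q : ℚ⟦X⟧) * w)⁻¹)
              = coeff (m+1) (B^(k+1) * (1 - (q : ℚ⟦X⟧) * w)⁻¹)
                + (((q+1)*(m+1)+k).choose m : ℚ) := by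
          intro k
          rw [hpow k, map_add, coeff_succ_X_mul, ih m (Nat.lt_succ_self m) (k+q+1)]
          rw [show (q+1)*m + (k+q+1) = (q+1)*(m+1)+k by ring]
        -- telescoping
        have hshift : ∀ k : ℕ,
            coeff (m+1) (B^(k+1) * (1 - (q : ℚ⟦X⟧) * w)⁻¹)
              = coeff (m+1) (B^(0+1) * (1 - (q : ℚ⟦X⟧) * w)⁻¹)
                + ((((q+1)*(m+1)+k).choose (m+1) : ℚ)
                   - (((q+1)*(m+1)).choose (m+1) : ℚ)) := by
          intro k
          induction k with
          | zero => simp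
          | succ k ihk =>
            rw [hstep k, ihk]
            have pascal := Nat.choose_succ_succ' ((q+1)*(m+1)+k) m
            have pascal' : ((((q+1)*(m+1)+k+1).choose (m+1) : ℕ) : ℚ)
                = (((q+1)*(m+1)+k).choose m : ℚ)
                  + (((q+1)*(m+1)+k).choose (m+1) : ℚ) := by
              exact_mod_cast congrArg (Nat.cast : ℕ → ℚ) pascal
            rw [show (q+1)*(m+1)+(k+1) = (q+1)*(m+1)+k+1 by ring]
            linear_combination -pascal'
        -- equation from the derivative relation
        have c1 : coeff (m+1) (B^(q+1+1) * (1 - (q : ℚ⟦X⟧) * w)⁻¹)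
            = ((m:ℚ)+2) * coeff (m+1) (B^(q+1)) := by
          rw [show q+1+1 = q+2 by ring, hu, coeff_derivative]
          have : coeff (m+1+1) w = coeff (m+1) (B^(q+1)) := by
            conv_lhs => rw [hw]
            rw [coeff_succ_X_mul]
          rw [this]
          push_cast
          ring
        have c2 : coeff (m+1) (B^(q+1))
            = coeff (m+1) (B^(q+1) * (1 - (q : ℚ⟦X⟧) * w)⁻¹)
              - (q:ℚ) * (((q+1)*(m+1)+q).choose m : ℚ) := by
          conv_lhs => rw [hBp]
          rw [map_sub, hqmul, coeff_succ_X_mul, ih m (Nat.lt_succ_self m) (2*q+1)]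
          rw [show (q+1)*m + (2*q+1) = (q+1)*(m+1)+q by ring]
        -- solve for the defect δ
        have key := one_pth_keyQ q m
        have hq1 := hshift (q+1)
        have hq0 := hshift q
        rw [show (q+1)*(m+1)+(q+1) = (q+1)*(m+1)+q+1 by ring] at hq1
        have hdelta : coeff (m+1) (B^(0+1) * (1 - (q : ℚ⟦X⟧) * w)⁻¹)
            = ((((q+1)*(m+1)).choose (m+1) : ℕ) : ℚ) := by
          have hm1 : ((m:ℚ)+1) ≠ 0 := by positivity
          have lin : ((m:ℚ)+1) * (coeff (m+1) (B^(0+1) * (1 - (q : ℚ⟦X⟧) * w)⁻¹)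
              - ((((q+1)*(m+1)).choose (m+1) : ℕ) : ℚ)) = 0 := by
            linear_combination hq1 - c1 - ((m:ℚ)+2) * c2 - ((m:ℚ)+2) * hq0 - key
          have := mul_eq_zero.mp lin
          rcases this with h | h
          · exact absurd h hm1
          · linarith [sub_eq_zero.mp h]
        intro k
        rw [hshift k, hdelta]
        ring
  intro n
  exact main n r
end

section
/- Let p ≥ 1 be an integer and let Φ ∈ ℚ⟦X⟧ satisfy Φ(0) = 0 and Φ·(1−Φ)^{p−1} = X. Then for every n ≥ 1, the n-th coefficient of (X·(1−X)⁻¹)∘Φ equals (1/(pn+1))·C(pn+1, n), i.e., the composition f∘Φ with f = X/(1−X) equals F_p − 1, where F_p is the generating function of the p-th order Fuss–Catalan numbers. -/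
open PowerSeries Finset

private lemma fc_hockey (d : ℕ) (hd : 1 ≤ d) (k : ℕ) :
    ∑ i ∈ range (k+1), Nat.choose (d-1+i) i = Nat.choose (d+k) k := by
  induction k with
  | zero => simp
  | succ k ih =>
      rw [Finset.sum_range_succ, ih]
      have h1 : d - 1 + (k+1) = d + k := by omega
      have h2 : d + (k+1) = (d+k) + 1 := by omega
      rw [h1, h2, Nat.choose_succ_succ]

private lemma fc_sum_id (d : ℕ) (hd : 1 ≤ d) (m : ℕ) :
    ∑ i ∈ range (m+1), (m+1-i) * Nat.choose (d-1+i) i = Nat.choose (d+m+1) m := by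
  induction m with
  | zero => simp
  | succ m ih =>
      have split : ∀ i ∈ range (m+2),
          (m+2-i) * Nat.choose (d-1+i) i
            = (m+1-i) * Nat.choose (d-1+i) i + Nat.choose (d-1+i) i := by
        intro i hi
        rw [Finset.mem_range] at hi
        have : m + 2 - i = (m + 1 - i) + 1 := by omega
        rw [this, Nat.add_mul, one_mul]
      rw [Finset.sum_congr rfl split, Finset.sum_add_distrib]
      have e1 : ∑ i ∈ range (m+2), (m+1-i) * Nat.choose (d-1+i) i
          = ∑ i ∈ range (m+1), (m+1-i) * Nat.choose (d-1+i) i := by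
        rw [Finset.sum_range_succ]
        simp
      rw [e1, ih, fc_hockey d hd (m+1)]
      have h2 : d + (m+1) + 1 = (d + m + 1) + 1 := by omega
      have h3 : d - 1 + (m + 1) = d + m := by omega
      rw [h2, Nat.choose_succ_succ]
      have h4 : d + (m+1) = d + m + 1 := by omega
      rw [h4]

private lemma fc_X_factor (e : ℕ) : ∃ s : Polynomial ℚ,
    Polynomial.X * s = 1 - (1 - Polynomial.X) ^ e := by
  have h : (Polynomial.X : Polynomial ℚ) ∣ (1 - (1 - Polynomial.X) ^ e) := by
    rw [Polynomial.X_dvd_iff]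
    simp [Polynomial.coeff_zero_eq_eval_zero]
  obtain ⟨s, hs⟩ := h
  exact ⟨s, hs.symm⟩

private lemma fc_basis (e n : ℕ) : ∀ d j, n + 1 ≤ j + d → ∀ q : Polynomial ℚ,
    ∃ (c : ℕ → ℚ) (R : Polynomial ℚ),
      Polynomial.X ^ j * q =
        (∑ k ∈ range (n+1),
          Polynomial.C (c k) * (Polynomial.X * (1 - Polynomial.X) ^ e) ^ k)
          + Polynomial.X ^ (n+1) * R := by
  intro d
  induction d with
  | zero =>
      intro j hj q
      refine ⟨0, Polynomial.X ^ (j - (n+1)) * q, ?_⟩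
      have : j = (n+1) + (j - (n+1)) := by omega
      rw [this]
      simp [pow_add, mul_assoc]
  | succ d ih =>
      intro j hj q
      by_cases h : n + 1 ≤ j + d
      · exact ih j h q
      · have hj' : j ≤ n := by omega
        obtain ⟨s, hs⟩ := fc_X_factor (e * j)
        obtain ⟨c', R', hcr⟩ := ih (j+1) (by omega) (q.divX + Polynomial.C (q.coeff 0) * s)
        have key : Polynomial.X ^ j * q
            = Polynomial.C (q.coeff 0) * (Polynomial.X * (1 - Polynomial.X) ^ e) ^ j
              + Polynomial.X ^ (j+1) * (q.divX + Polynomial.C (q.coeff 0) * s) := by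
          have hq : Polynomial.X * q.divX + Polynomial.C (q.coeff 0) = q :=
            Polynomial.X_mul_divX_add q
          linear_combination (-(Polynomial.X ^ j : Polynomial ℚ)) * hq
            + (-(Polynomial.X ^ j * Polynomial.C (q.coeff 0) : Polynomial ℚ)) * hs
        refine ⟨fun k => if k = j then c' k + q.coeff 0 else c' k, R', ?_⟩
        have hsum : ∑ k ∈ range (n+1),
            Polynomial.C (if k = j then c' k + q.coeff 0 else c' k)
              * (Polynomial.X * (1 - Polynomial.X) ^ e) ^ k
            = (∑ k ∈ range (n+1),
                Polynomial.C (c' k) * (Polynomial.X * (1 - Polynomial.X) ^ e) ^ k)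
              + Polynomial.C (q.coeff 0) * (Polynomial.X * (1 - Polynomial.X) ^ e) ^ j := by
          have hmem : j ∈ range (n+1) := Finset.mem_range.mpr (by omega)
          have hterm : ∀ k ∈ range (n+1),
              Polynomial.C (if k = j then c' k + q.coeff 0 else c' k)
                * (Polynomial.X * (1 - Polynomial.X) ^ e) ^ k
              = Polynomial.C (c' k) * (Polynomial.X * (1 - Polynomial.X) ^ e) ^ k
                + (if k = j
                    then Polynomial.C (q.coeff 0) * (Polynomial.X * (1 - Polynomial.X) ^ e) ^ k
                    else 0) := by
            intro k _
            split_ifs with h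
            · rw [map_add, add_mul]
            · rw [add_zero]
          rw [Finset.sum_congr rfl hterm, Finset.sum_add_distrib,
            Finset.sum_ite_eq' (range (n+1)) j
              (fun k => Polynomial.C (q.coeff 0) * (Polynomial.X * (1 - Polynomial.X) ^ e) ^ k),
            if_pos hmem]
        rw [hsum, key, hcr]
        ring

private lemma fc_key_coeff (e n k : ℕ) (hn : 1 ≤ n) (hk : k ≤ n) :
    coeff (n-1) ((d⁄dX ℚ (((X : ℚ⟦X⟧) * (1-X)^e)^k))
        * ((invOneSubPow ℚ e : ℚ⟦X⟧ˣ) : ℚ⟦X⟧)^n)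
      = if k = n then (n:ℚ) else 0 := by
  set u : ℚ⟦X⟧ := (1-X)^e with hu
  set w : ℚ⟦X⟧ := ((invOneSubPow ℚ e : ℚ⟦X⟧ˣ) : ℚ⟦X⟧) with hw
  have huw : u * w = 1 := by
    rw [hu, hw, ← invOneSubPow_inv_eq_one_sub_pow]
    exact (invOneSubPow ℚ e).inv_val
  have hpow : ∀ a b : ℕ, a ≤ b → u^a * w^b = w^(b-a) := by
    intro a b hab
    have hb : b = a + (b-a) := by omega
    calc u^a * w^b = u^a * (w^a * w^(b-a)) := by rw [← pow_add, ← hb]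
      _ = (u*w)^a * w^(b-a) := by rw [mul_pow]; ring
      _ = w^(b-a) := by rw [huw, one_pow, one_mul]
  rcases Nat.eq_zero_or_pos k with hk0 | hk1
  · subst hk0
    rw [pow_zero]
    simp only [Derivation.map_one_eq_zero, zero_mul, map_zero]
    rw [if_neg (by omega)]
  obtain ⟨k', rfl⟩ : ∃ k', k = k' + 1 := ⟨k - 1, by omega⟩
  obtain ⟨m, hmn⟩ : ∃ m, n = (k' + 1) + m := ⟨n - (k' + 1), by omega⟩
  have hd : d⁄dX ℚ ((X*u)^(k'+1))
      = ((k'+1 : ℕ) : ℚ⟦X⟧) * ((X*u)^k' * (X * d⁄dX ℚ u + u)) := by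
    rw [Derivation.leibniz_pow, Derivation.leibniz, derivative_X]
    simp only [Nat.add_sub_cancel, smul_eq_mul, nsmul_eq_mul]
    ring
  have h1 : u^k' * w^n = w^(m+1) := by
    rw [hpow k' n (by omega)]; congr 1; omega
  have h2 : u^(k'+1) * w^n = w^m := by
    rw [hpow (k'+1) n hk]; congr 1; omega
  have hE : (d⁄dX ℚ ((X*u)^(k'+1))) * w^n
      = C ((k'+1 : ℕ) : ℚ) * (X^k' * w^m)
        + C ((k'+1 : ℕ) : ℚ) * (X^(k'+1) * (d⁄dX ℚ u * w^(m+1))) := by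
    rw [hd]
    have hC : (C ((k'+1 : ℕ) : ℚ)) = ((k'+1 : ℕ) : ℚ⟦X⟧) := by
      rw [map_natCast]
    rw [hC]
    linear_combination (((k'+1:ℕ) : ℚ⟦X⟧) * X^(k'+1) * d⁄dX ℚ u) * h1
      + (((k'+1:ℕ) : ℚ⟦X⟧) * X^k') * h2
  rw [hE, map_add, coeff_C_mul, coeff_C_mul]
  rcases Nat.lt_or_ge k' (n-1) with hlt | hge
  · -- k'+1 < n, i.e. m ≥ 1
    obtain ⟨m', rfl⟩ : ∃ m', m = m' + 1 := ⟨m - 1, by omega⟩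
    rw [coeff_X_pow_mul', if_pos (by omega), coeff_X_pow_mul', if_pos (by omega)]
    have hnm : n - 1 - k' = m' + 1 := by omega
    have hnm2 : n - 1 - (k'+1) = m' := by omega
    rw [hnm, hnm2]
    have h3 : d⁄dX ℚ w = -(w^2 * d⁄dX ℚ u) := by
      have h0 := congrArg (d⁄dX ℚ) huw
      rw [Derivation.leibniz, Derivation.map_one_eq_zero, smul_eq_mul, smul_eq_mul] at h0
      linear_combination w * h0 - (d⁄dX ℚ w) * huw
    have h4 : d⁄dX ℚ (w^(m'+1)) = C (-((m'+1:ℕ):ℚ)) * (d⁄dX ℚ u * w^(m'+2)) := by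
      rw [Derivation.leibniz_pow]
      simp only [Nat.add_sub_cancel, smul_eq_mul, nsmul_eq_mul]
      rw [h3, map_neg, map_natCast]
      ring
    have h5 : coeff m' (d⁄dX ℚ (w^(m'+1))) = coeff (m'+1) (w^(m'+1)) * (m'+1) :=
      coeff_derivative _ _
    rw [h4, coeff_C_mul] at h5
    have h6 : coeff m' (d⁄dX ℚ u * w^(m'+2)) = -coeff (m'+1) (w^(m'+1)) := by
      have hm1 : ((m' : ℚ) + 1) ≠ 0 := by positivity
      push_cast at h5
      refine mul_left_cancel₀ hm1 ?_
      linear_combination -h5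
    rw [h6, if_neg (by omega)]
    ring
  · -- k'+1 = n, m = 0
    have hkn : k' + 1 = n := by omega
    have hm0 : m = 0 := by omega
    rw [hm0, coeff_X_pow_mul', coeff_X_pow_mul',
      if_pos (show k' ≤ n - 1 by omega), if_neg (show ¬ (k' + 1 ≤ n - 1) by omega)]
    have hz : n - 1 - k' = 0 := by omega
    rw [hz, if_pos hkn]
    simp [hkn]

private lemma fc_w_pow (e n : ℕ) :
    ((invOneSubPow ℚ e : ℚ⟦X⟧ˣ) : ℚ⟦X⟧) ^ n = ((invOneSubPow ℚ (e*n) : ℚ⟦X⟧ˣ) : ℚ⟦X⟧) := by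
  set w : ℚ⟦X⟧ := ((invOneSubPow ℚ e : ℚ⟦X⟧ˣ) : ℚ⟦X⟧) with hw
  set v : ℚ⟦X⟧ := ((invOneSubPow ℚ (e*n) : ℚ⟦X⟧ˣ) : ℚ⟦X⟧) with hv
  have h1 : ((1-X : ℚ⟦X⟧)^e) * w = 1 := by
    rw [hw, ← invOneSubPow_inv_eq_one_sub_pow]
    exact (invOneSubPow ℚ e).inv_val
  have h2 : ((1-X : ℚ⟦X⟧)^(e*n)) * v = 1 := by
    rw [hv, ← invOneSubPow_inv_eq_one_sub_pow]
    exact (invOneSubPow ℚ (e*n)).inv_val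
  have h3 : ((1-X : ℚ⟦X⟧)^(e*n)) * w^n = 1 := by
    rw [pow_mul, ← mul_pow, h1, one_pow]
  calc w^n = w^n * (((1-X : ℚ⟦X⟧)^(e*n)) * v) := by rw [h2, mul_one]
    _ = (((1-X : ℚ⟦X⟧)^(e*n)) * w^n) * v := by ring
    _ = v := by rw [h3, one_mul]

private lemma fc_lagrange (e n j : ℕ) (hj1 : 1 ≤ j) (hjn : j ≤ n) (Φ : ℚ⟦X⟧)
    (hΦ0 : constantCoeff Φ = 0) (hΦe : Φ * (1 - Φ) ^ e = X) :
    (n : ℚ) * coeff n (Φ^j)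
      = (j : ℚ) * coeff (n-j) (((invOneSubPow ℚ e : ℚ⟦X⟧ˣ) : ℚ⟦X⟧)^n) := by
  have hn : 1 ≤ n := le_trans hj1 hjn
  obtain ⟨c, R, hcR⟩ := fc_basis e n (n+1) j (by omega) 1
  rw [mul_one] at hcR
  set w : ℚ⟦X⟧ := ((invOneSubPow ℚ e : ℚ⟦X⟧ˣ) : ℚ⟦X⟧) with hw
  -- Part 1 : coeff n (Φ^j) = c n
  have part1 : coeff n (Φ^j) = c n := by
    have h5 := congrArg (Polynomial.aeval Φ) hcR
    simp only [map_add, map_mul, map_pow, map_sum, Polynomial.aeval_X, map_sub, map_one,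
      Polynomial.aeval_C] at h5
    rw [hΦe] at h5
    have h6 := congrArg (coeff n) h5
    rw [map_add, map_sum] at h6
    have hterm : ∀ k ∈ range (n+1),
        coeff n (algebraMap ℚ ℚ⟦X⟧ (c k) * X ^ k) = if k = n then c n else 0 := by
      intro k _
      rw [PowerSeries.algebraMap_apply, coeff_C_mul, coeff_X_pow]
      by_cases hkn : k = n
      · simp [hkn]
      · rw [if_neg (fun h => hkn h.symm), if_neg hkn, mul_zero]
    rw [Finset.sum_congr rfl hterm, Finset.sum_ite_eq' (range (n+1)) n (fun _ => c n),
      if_pos (Finset.mem_range.mpr (by omega))] at h6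
    have hzero : coeff n (Φ^(n+1) * Polynomial.aeval Φ R) = 0 := by
      obtain ⟨T, hT⟩ : (X : ℚ⟦X⟧)^(n+1) ∣ Φ^(n+1) * Polynomial.aeval Φ R :=
        Dvd.dvd.mul_right (pow_dvd_pow_of_dvd (PowerSeries.X_dvd_iff.mpr hΦ0) (n+1)) _
      rw [hT, coeff_X_pow_mul', if_neg (by omega)]
    rw [hzero, add_zero] at h6
    exact h6
  -- Part 2 : power series side
  have h7 : (X : ℚ⟦X⟧)^j
      = (∑ k ∈ range (n+1), C (c k) * ((X * (1-X)^e : ℚ⟦X⟧))^k)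
        + X^(n+1) * (R : ℚ⟦X⟧) := by
    have := congrArg (Polynomial.coeToPowerSeries.ringHom (R := ℚ)) hcR
    simpa only [map_add, map_mul, map_pow, map_sum, map_sub, map_one,
      Polynomial.coeToPowerSeries.ringHom_apply, Polynomial.coe_X, Polynomial.coe_C] using this
  have h8 := congrArg (fun F => coeff (n-1) ((d⁄dX ℚ F) * w^n)) h7
  -- LHS of h8
  obtain ⟨j', rfl⟩ : ∃ j', j = j' + 1 := ⟨j - 1, by omega⟩
  have hdX : d⁄dX ℚ ((X : ℚ⟦X⟧)^(j'+1)) = C ((j'+1 : ℕ) : ℚ) * X^j' := by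
    rw [Derivation.leibniz_pow, derivative_X]
    simp only [Nat.add_sub_cancel, smul_eq_mul, nsmul_eq_mul, mul_one]
    rw [map_natCast]
  have hL : coeff (n-1) ((d⁄dX ℚ ((X:ℚ⟦X⟧)^(j'+1))) * w^n)
      = ((j'+1 : ℕ) : ℚ) * coeff (n-(j'+1)) (w^n) := by
    rw [hdX, mul_assoc, coeff_C_mul, coeff_X_pow_mul', if_pos (by omega),
      show n - 1 - j' = n - (j'+1) from by omega]
  -- RHS of h8
  have hdsum : d⁄dX ℚ ((∑ k ∈ range (n+1), C (c k) * ((X * (1-X)^e : ℚ⟦X⟧))^k)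
        + X^(n+1) * (R : ℚ⟦X⟧))
      = (∑ k ∈ range (n+1), C (c k) * d⁄dX ℚ (((X * (1-X)^e : ℚ⟦X⟧))^k))
        + d⁄dX ℚ (X^(n+1) * (R : ℚ⟦X⟧)) := by
    rw [map_add, map_sum]
    congr 1
    refine Finset.sum_congr rfl fun k _ => ?_
    rw [Derivation.leibniz, derivative_C, smul_zero, add_zero, smul_eq_mul]
  have hRzero : coeff (n-1) ((d⁄dX ℚ (X^(n+1) * (R : ℚ⟦X⟧))) * w^n) = 0 := by
    have hform : d⁄dX ℚ ((X : ℚ⟦X⟧)^(n+1) * (R : ℚ⟦X⟧))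
        = X^n * ((((n+1 : ℕ) : ℚ⟦X⟧)) * (R : ℚ⟦X⟧) + X * d⁄dX ℚ (R : ℚ⟦X⟧)) := by
      rw [Derivation.leibniz, Derivation.leibniz_pow, derivative_X]
      simp only [Nat.add_sub_cancel, smul_eq_mul, nsmul_eq_mul, mul_one]
      ring
    rw [hform, mul_assoc, coeff_X_pow_mul', if_neg (by omega)]
  have hmain : coeff (n-1)
      ((∑ k ∈ range (n+1), C (c k) * d⁄dX ℚ (((X * (1-X)^e : ℚ⟦X⟧))^k)) * w^n)
      = (n : ℚ) * c n := by
    rw [Finset.sum_mul, map_sum]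
    have hterm2 : ∀ k ∈ range (n+1),
        coeff (n-1) ((C (c k) * d⁄dX ℚ (((X * (1-X)^e : ℚ⟦X⟧))^k)) * w^n)
          = if k = n then c n * n else 0 := by
      intro k hk
      rw [Finset.mem_range] at hk
      rw [mul_assoc, coeff_C_mul, fc_key_coeff e n k hn (by omega)]
      by_cases hkn : k = n
      · rw [if_pos hkn, if_pos hkn, hkn]
      · rw [if_neg hkn, if_neg hkn, mul_zero]
    rw [Finset.sum_congr rfl hterm2, Finset.sum_ite_eq' (range (n+1)) n (fun _ => c n * n),
      if_pos (Finset.mem_range.mpr (by omega))]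
    ring
  rw [hL, hdsum, add_mul, map_add, hmain, hRzero, add_zero] at h8
  rw [part1, h8]

private lemma fc_inv_one_sub : ((1 : ℚ⟦X⟧) - X)⁻¹ = (PowerSeries.mk 1 : ℚ⟦X⟧) := by
  have h1 : constantCoeff ((1 : ℚ⟦X⟧) - X) ≠ 0 := by
    simp
  have h2 : ((1:ℚ⟦X⟧) - X) * ((1:ℚ⟦X⟧) - X)⁻¹ = 1 := PowerSeries.mul_inv_cancel _ h1
  calc ((1:ℚ⟦X⟧) - X)⁻¹ = ((PowerSeries.mk 1 : ℚ⟦X⟧) * (1 - X)) * (1 - X)⁻¹ := by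
        rw [mk_one_mul_one_sub_eq_one, one_mul]
    _ = (PowerSeries.mk 1 : ℚ⟦X⟧) * (((1:ℚ⟦X⟧) - X) * (1 - X)⁻¹) := by ring
    _ = (PowerSeries.mk 1 : ℚ⟦X⟧) := by rw [h2, mul_one]

private lemma fc_coeff_f (i : ℕ) :
    coeff i ((X : ℚ⟦X⟧) * (1 - X)⁻¹) = if i = 0 then 0 else 1 := by
  rw [fc_inv_one_sub, ← pow_one (X : ℚ⟦X⟧), coeff_X_pow_mul']
  rcases Nat.eq_zero_or_pos i with h | h
  · rw [if_neg (by omega), if_pos h]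
  · rw [if_pos (by omega), if_neg (by omega), coeff_mk, Pi.one_apply]

theorem one_pth_fuss_catalan_f' (p : ℕ) (hp : 1 ≤ p) (Φ : ℚ⟦X⟧)
    (hΦ0 : constantCoeff Φ = 0) (hΦ : Φ * (1 - Φ) ^ (p - 1) = X) :
    ∀ n : ℕ, 1 ≤ n →
      coeff n (PowerSeries.mk fun n => ∑ j ∈ Finset.range (n + 1),
        (PowerSeries.coeff j ((X * (1 - X)⁻¹ : ℚ⟦X⟧))) * PowerSeries.coeff n (Φ ^ j)) =
        (1 : ℚ) / ((p * n + 1 : ℕ) : ℚ) * (Nat.choose (p * n + 1) n : ℚ) := by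
  intro n hn
  rw [coeff_mk]
  rcases eq_or_lt_of_le hp with hp1 | hp2
  · -- p = 1
    have hΦX : Φ = X := by
      have : p - 1 = 0 := by omega
      rw [this, pow_zero, mul_one] at hΦ
      exact hΦ
    subst hΦX
    have hterm : ∀ j ∈ range (n+1),
        coeff j ((X : ℚ⟦X⟧) * (1-X)⁻¹) * coeff n ((X:ℚ⟦X⟧)^j)
          = if j = n then 1 else 0 := by
      intro j hj
      rw [fc_coeff_f, coeff_X_pow]
      by_cases hjn : j = n
      · rw [if_pos hjn, if_neg (by omega), if_pos hjn.symm, one_mul]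
      · have h2 : ¬ n = j := fun h => hjn h.symm
        simp [hjn, h2]
    rw [Finset.sum_congr rfl hterm, Finset.sum_ite_eq' (range (n+1)) n (fun _ => (1:ℚ)),
      if_pos (Finset.mem_range.mpr (by omega))]
    have hpn : p * n = n := by rw [← hp1, one_mul]
    rw [hpn, Nat.choose_succ_self_right]
    push_cast
    rw [one_div, inv_mul_cancel₀ (by positivity)]
  · -- p ≥ 2
    set e : ℕ := p - 1 with he
    have he1 : 1 ≤ e := by omega
    have hen : 0 < e * n := by positivity
    have hΦe : Φ * (1 - Φ) ^ e = X := hΦ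
    set G : ℕ → ℕ := fun i => (n-i) * Nat.choose (e*n-1+i) i with hG
    have hchoose : ∀ i, i ≤ n → Nat.choose (e*n-1+i) (e*n-1) = Nat.choose (e*n-1+i) i := by
      intro i _
      have h := Nat.choose_symm (show e*n-1 ≤ e*n-1+i from by omega)
      rw [show e*n-1+i-(e*n-1) = i from by omega] at h
      exact h.symm
    have hterm : ∀ j ∈ range (n+1),
        coeff j ((X : ℚ⟦X⟧) * (1-X)⁻¹) * coeff n (Φ^j)
          = (1/(n:ℚ)) * ((G (n-j) : ℕ) : ℚ) := by
      intro j hj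
      rw [Finset.mem_range] at hj
      rw [fc_coeff_f]
      by_cases hj0 : j = 0
      · subst hj0
        simp [hG]
      · rw [if_neg hj0, one_mul]
        have hl := fc_lagrange e n j (by omega) (by omega) Φ hΦ0 hΦe
        rw [fc_w_pow, invOneSubPow_val_eq_mk_sub_one_add_choose_of_pos ℚ (e*n) hen,
          coeff_mk, hchoose (n-j) (by omega)] at hl
        have hGv : G (n-j) = j * Nat.choose (e*n-1+(n-j)) (n-j) := by
          rw [hG]
          simp only []
          rw [show n-(n-j) = j from by omega]
        rw [hGv]
        have hn0 : (n:ℚ) ≠ 0 := by positivity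
        push_cast
        have hstep : coeff n (Φ^j)
            = ((j:ℚ) * ((Nat.choose (e*n-1+(n-j)) (n-j) : ℕ) : ℚ)) / (n:ℚ) := by
          rw [eq_div_iff hn0]
          linear_combination hl
        rw [hstep]
        ring
    rw [Finset.sum_congr rfl hterm, ← Finset.mul_sum]
    have hrefl : ∑ j ∈ range (n+1), G (n-j) = ∑ i ∈ range (n+1), G i := by
      have h := Finset.sum_range_reflect G (n+1)
      simpa using h
    have hsum2 : ∑ i ∈ range (n+1), G i = Nat.choose (p*n) (n-1) := by
      rw [Finset.sum_range_succ]
      have hGn : G n = 0 := by simp [hG]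
      rw [hGn, add_zero]
      have h := fc_sum_id (e*n) (by omega) (n-1)
      rw [show n-1+1 = n from by omega] at h
      have hpn : e*n + (n-1) + 1 = p*n := by
        have hp' : p = e + 1 := by omega
        rw [hp', Nat.succ_mul]
        omega
      rw [hpn] at h
      rw [← h]
    have hcast : ∑ j ∈ range (n+1), ((G (n-j) : ℕ) : ℚ) = ((Nat.choose (p*n) (n-1) : ℕ) : ℚ) := by
      rw [← Nat.cast_sum, hrefl, hsum2]
    rw [hcast]
    -- final binomial identity
    have hNat : (p*n+1) * Nat.choose (p*n) (n-1) = Nat.choose (p*n+1) n * n := by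
      have h := Nat.add_one_mul_choose_eq (p*n) (n-1)
      rw [show n-1+1 = n from by omega] at h
      exact h
    have hQ := congrArg (Nat.cast : ℕ → ℚ) hNat
    push_cast at hQ
    have hn0 : (n:ℚ) ≠ 0 := by positivity
    have hpn0 : ((p:ℚ) * n + 1) ≠ 0 := by positivity
    push_cast
    field_simp
    linear_combination hQ


/-- For `f = X/(1-X)` and `Φ` the compositional inverse of `X(1-X)^{p-1}`,
the composition `f ∘ Φ` has coefficients the p-th order Fuss–Catalan numbers
`(1/(pn+1))·C(pn+1, n)` (for `n ≥ 1`), i.e. `f ∘ Φ = F_p - 1`. -/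
theorem one_pth_fuss_catalan_f (p : ℕ) (hp : 1 ≤ p) (Φ : ℚ⟦X⟧)
    (hΦ0 : constantCoeff Φ = 0) (hΦ : Φ * (1 - Φ) ^ (p - 1) = X) :
    ∀ n : ℕ, 1 ≤ n →
      coeff n (((X * (1 - X)⁻¹ : ℚ⟦X⟧)).comp Φ) =
        (1 : ℚ) / ((p * n + 1 : ℕ) : ℚ) * (Nat.choose (p * n + 1) n : ℚ) := by
  intro n hn
  exact one_pth_fuss_catalan_f' p hp Φ hΦ0 hΦ n hn
end

section
/- Let p ≥ 1 be an integer and define F_p ∈ ℚ⟦X⟧ by [X^n]F_p = (1/((p−1)n+1))·C(pn, n). Then composing F_p with X·(1−X)^{p−1} gives the geometric series: F_p ∘ (X·(1−X)^{p−1}) = (1−X)⁻¹. -/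
open PowerSeries Finset

/-- Generalized binomial coefficient `ch x k = x(x-1)⋯(x-k+1)/k!` over `ℚ`. -/
def FCch (x : ℚ) (k : ℕ) : ℚ := (∏ i ∈ Finset.range k, (x - i)) / (Nat.factorial k)

lemma FCch_zero (x : ℚ) : FCch x 0 = 1 := by simp [FCch]

lemma FCch_pascal (x : ℚ) (k : ℕ) : FCch (x + 1) (k + 1) = FCch x (k + 1) + FCch x k := by
  unfold FCch
  rw [Finset.prod_range_succ' (fun i => x + 1 - (i : ℕ)), Finset.prod_range_succ]
  have h1 : ∀ i ∈ Finset.range k, (x + 1 - ((i + 1 : ℕ) : ℚ)) = x - i := by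
    intro i _; push_cast; ring
  rw [Finset.prod_congr rfl h1]
  have h2 : ((Nat.factorial (k+1) : ℚ)) = (k+1) * Nat.factorial k := by
    rw [Nat.factorial_succ]; push_cast; ring
  have h3 : (Nat.factorial k : ℚ) ≠ 0 := by positivity
  have h4 : ((k : ℚ) + 1) ≠ 0 := by positivity
  rw [h2]
  field_simp
  ring

lemma FCprod_cast (q : ℕ) : ∀ m : ℕ, ∏ i ∈ Finset.range m, ((q : ℚ) - i) = (q.descFactorial m : ℚ) := by
  intro m
  induction m with
  | zero => simp
  | succ m ih =>
    rw [Finset.prod_range_succ, ih, Nat.descFactorial_succ]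
    by_cases h : m ≤ q
    · push_cast [Nat.cast_sub h]; ring
    · have hq : q < m := Nat.lt_of_not_le h
      have h1 : q.descFactorial m = 0 := Nat.descFactorial_eq_zero_iff_lt.mpr hq
      have h2 : q.descFactorial (m+1) = 0 := Nat.descFactorial_eq_zero_iff_lt.mpr (Nat.lt_succ_of_lt hq)
      simp [h1, h2]

lemma FCch_nat (q k : ℕ) : FCch (q : ℚ) k = (q.choose k : ℚ) := by
  unfold FCch
  rw [FCprod_cast q k, Nat.descFactorial_eq_factorial_mul_choose]
  have h3 : (Nat.factorial k : ℚ) ≠ 0 := by positivity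
  push_cast
  field_simp

lemma FCch_reflect (q m : ℕ) : FCch ((m : ℚ) - q - 1) m = (-1) ^ m * (q.choose m : ℚ) := by
  unfold FCch
  have h1 : ∏ i ∈ Finset.range m, ((m : ℚ) - q - 1 - i) = ∏ i ∈ Finset.range m, ((i : ℚ) - q) := by
    rw [← Finset.prod_range_reflect (fun i => (i : ℚ) - q) m]
    apply Finset.prod_congr rfl
    intro i hi
    have hi' : i < m := Finset.mem_range.mp hi
    have : ((m - 1 - i : ℕ) : ℚ) = (m : ℚ) - 1 - i := by
      have h2 : i ≤ m - 1 := Nat.le_sub_one_of_lt hi'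
      have h3 : 1 ≤ m := Nat.one_le_of_lt (Nat.lt_of_le_of_lt (Nat.zero_le i) hi')
      push_cast [Nat.cast_sub h2, Nat.cast_sub h3]
      ring
    rw [this]; ring
  have h2 : ∏ i ∈ Finset.range m, ((i : ℚ) - q) = (-1) ^ m * (q.descFactorial m : ℚ) := by
    rw [← FCprod_cast q m]
    have h3 : ∀ i ∈ Finset.range m, ((i : ℚ) - q) = (-1) * ((q : ℚ) - i) := by
      intro i _; ring
    rw [Finset.prod_congr rfl h3, Finset.prod_mul_distrib, Finset.prod_const, Finset.card_range]
  rw [h1, h2, Nat.descFactorial_eq_factorial_mul_choose]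
  have h4 : (Nat.factorial m : ℚ) ≠ 0 := by positivity
  push_cast
  field_simp

/-- Rothe weighted binomial `A_m(y) = y/(y+pm) C(y+pm, m)` in subtraction form. -/
def FCA (p : ℕ) (y : ℚ) : ℕ → ℚ
  | 0 => 1
  | (m+1) => FCch (y + p * (m+1 : ℕ)) (m+1) - p * FCch (y + p * (m+1 : ℕ) - 1) m

lemma FCA_rec (p : ℕ) (y : ℚ) (m : ℕ) :
    FCA p (y + 1) (m + 1) = FCA p y (m + 1) + FCA p (y + p) m := by
  cases m with
  | zero =>
    have c1 : ∀ z : ℚ, FCch z 1 = z := by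
      intro z; simp [FCch, Finset.prod_range_one]
    simp only [FCA, c1, FCch_zero]
    push_cast
    ring
  | succ m =>
    simp only [FCA]
    have e1 : y + 1 + (p : ℚ) * ((m + 1 + 1 : ℕ) : ℚ) = (y + (p : ℚ) * ((m + 1 + 1 : ℕ) : ℚ)) + 1 := by
      ring
    have e2 : y + 1 + (p : ℚ) * ((m + 1 + 1 : ℕ) : ℚ) - 1 = (y + (p : ℚ) * ((m + 1 + 1 : ℕ) : ℚ) - 1) + 1 := by
      ring
    rw [e2, FCch_pascal, e1, FCch_pascal]
    have e3 : y + (p:ℚ) + (p : ℚ) * ((m + 1 : ℕ) : ℚ) = y + (p : ℚ) * ((m + 1 + 1 : ℕ) : ℚ) := by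
      push_cast; ring
    have e4 : y + (p:ℚ) + (p : ℚ) * ((m + 1 : ℕ) : ℚ) - 1 = y + (p : ℚ) * ((m + 1 + 1 : ℕ) : ℚ) - 1 := by
      push_cast; ring
    rw [e4, e3]
    ring

lemma FCA_zero (p : ℕ) (hp : 1 ≤ p) (m : ℕ) : FCA p 0 (m + 1) = 0 := by
  have hN : 1 ≤ p * (m + 1) := Nat.one_le_iff_ne_zero.mpr (by positivity)
  have e1 : (0 : ℚ) + p * ((m + 1 : ℕ) : ℚ) = ((p * (m + 1) : ℕ) : ℚ) := by push_cast; ring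
  have e2 : (0 : ℚ) + p * ((m + 1 : ℕ) : ℚ) - 1 = ((p * (m + 1) - 1 : ℕ) : ℚ) := by
    push_cast [Nat.cast_sub hN]; ring
  simp only [FCA]
  rw [e2, e1, FCch_nat, FCch_nat]
  have key : p * (m + 1) * Nat.choose (p * (m + 1) - 1) m
      = Nat.choose (p * (m + 1)) (m + 1) * (m + 1) := by
    have := Nat.add_one_mul_choose_eq (p * (m + 1) - 1) m
    rwa [Nat.sub_add_cancel hN] at this
  have hm' : ((m : ℚ) + 1) ≠ 0 := by positivity
  have hQ : ((p * (m + 1) : ℕ) : ℚ) * (Nat.choose (p * (m + 1) - 1) m : ℚ)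
      = (Nat.choose (p * (m + 1)) (m + 1) : ℚ) * ((m : ℚ) + 1) := by exact_mod_cast key
  have key2 : (p : ℚ) * (Nat.choose (p * (m + 1) - 1) m : ℚ)
      = (Nat.choose (p * (m + 1)) (m + 1) : ℚ) := by
    apply mul_right_cancel₀ hm'
    push_cast at hQ
    linear_combination hQ
  linear_combination -key2

lemma FCA_one (p : ℕ) (hp : 1 ≤ p) (j : ℕ) :
    FCA p 1 j = 1 / (((p - 1) * j + 1 : ℕ) : ℚ) * (Nat.choose (p * j) j : ℚ) := by
  cases j with
  | zero => simp [FCA]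
  | succ m =>
    set N := p * (m + 1) with hN
    have hmN : m + 1 ≤ N := Nat.le_mul_of_pos_left _ (by omega)
    have e1 : (1 : ℚ) + p * ((m + 1 : ℕ) : ℚ) = ((N + 1 : ℕ) : ℚ) := by push_cast [hN]; ring
    have e2 : (1 : ℚ) + p * ((m + 1 : ℕ) : ℚ) - 1 = ((N : ℕ) : ℚ) := by push_cast [hN]; ring
    simp only [FCA]
    rw [e2, e1, FCch_nat, FCch_nat]
    have ed : (p - 1) * (m + 1) + 1 = N - m := by
      have : (p - 1) * (m + 1) = N - (m + 1) := by
        rw [hN, Nat.sub_mul, one_mul]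
      omega
    rw [ed]
    have f1 : Nat.choose (N + 1) (m + 1) = Nat.choose N m + Nat.choose N (m + 1) :=
      Nat.choose_succ_succ N m
    have f2 : Nat.choose N (m + 1) * (m + 1) = Nat.choose N m * (N - m) :=
      Nat.choose_succ_right_eq N m
    have hNm : (((N - m : ℕ)) : ℚ) = (N : ℚ) - m := by
      push_cast [Nat.cast_sub (le_trans (Nat.le_succ m) hmN)]; ring
    have hd : (((N - m : ℕ)) : ℚ) ≠ 0 := by
      rw [hNm]
      have : (m : ℚ) + 1 ≤ N := by exact_mod_cast hmN
      linarith
    have f1q : ((N + 1).choose (m + 1) : ℚ)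
        = (N.choose m : ℚ) + (N.choose (m + 1) : ℚ) := by exact_mod_cast f1
    have f2q : (N.choose (m + 1) : ℚ) * ((m : ℚ) + 1) = (N.choose m : ℚ) * ((N : ℚ) - m) := by
      rw [← hNm]; exact_mod_cast f2
    have hpN : (p : ℚ) * ((m : ℚ) + 1) = N := by push_cast [hN]; ring
    rw [f1q, one_div, inv_mul_eq_div, eq_div_iff hd, hNm]
    linear_combination ((p : ℚ) - 1) * f2q - (N.choose (m + 1) : ℚ) * hpN

theorem FCrothe (p : ℕ) (hp : 1 ≤ p) :
    ∀ (n y : ℕ) (x : ℚ),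
      ∑ k ∈ Finset.range (n + 1), FCch (x + p * k) k * FCA p y (n - k)
        = FCch (x + y + p * n) n := by
  intro n
  induction n with
  | zero =>
    intro y x
    have h0 : FCA p (y:ℚ) 0 = 1 := rfl
    norm_num [Finset.sum_range_one, FCch_zero, h0]
  | succ n ih =>
    intro y
    induction y with
    | zero =>
      intro x
      simp only [Nat.cast_zero]
      rw [Finset.sum_eq_single (n + 1)]
      · show FCch (x + p * ((n+1 : ℕ) : ℚ)) (n + 1) * FCA p 0 ((n+1) - (n+1)) = _
        rw [Nat.sub_self]
        show _ * FCA p 0 0 = _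
        have : FCA p 0 0 = 1 := rfl
        rw [this, mul_one]
        norm_num
      · intro k hk hkne
        have hk' : k < n + 1 := by
          have := Finset.mem_range.mp hk; omega
        have : (n + 1) - k = (n - k) + 1 := by omega
        rw [this, FCA_zero p hp, mul_zero]
      · intro h
        exact absurd (Finset.self_mem_range_succ (n+1)) h
    | succ y ihy =>
      intro x
      have hsplit : ∀ k ∈ Finset.range (n + 1),
          FCch (x + p * k) k * FCA p ((y:ℚ) + 1) ((n + 1) - k)
            = FCch (x + p * k) k * FCA p (y:ℚ) ((n + 1) - k)
              + FCch (x + p * k) k * FCA p ((y:ℚ) + p) (n - k) := by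
        intro k hk
        have hk' : k ≤ n := by have := Finset.mem_range.mp hk; omega
        have h1 : (n + 1) - k = (n - k) + 1 := by omega
        rw [h1, FCA_rec, mul_add]
      have cast1 : ((y + 1 : ℕ) : ℚ) = (y : ℚ) + 1 := by push_cast; ring
      have cast2 : ((y + p : ℕ) : ℚ) = (y : ℚ) + p := by push_cast; ring
      calc ∑ k ∈ Finset.range (n + 2), FCch (x + p * k) k * FCA p ((y+1 : ℕ) : ℚ) ((n+1) - k)
          = (∑ k ∈ Finset.range (n + 1), FCch (x + p * k) k * FCA p ((y:ℚ) + 1) ((n+1) - k))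
            + FCch (x + p * ((n+1:ℕ):ℚ)) (n+1) * FCA p ((y:ℚ) + 1) 0 := by
            rw [Finset.sum_range_succ, cast1, Nat.sub_self]
        _ = (∑ k ∈ Finset.range (n + 1), FCch (x + p * k) k * FCA p (y:ℚ) ((n+1) - k))
            + (∑ k ∈ Finset.range (n + 1), FCch (x + p * k) k * FCA p ((y:ℚ) + p) (n - k))
            + FCch (x + p * ((n+1:ℕ):ℚ)) (n+1) * FCA p (y:ℚ) 0 := by
            rw [Finset.sum_congr rfl hsplit, Finset.sum_add_distrib]
            have : FCA p ((y:ℚ) + 1) 0 = FCA p (y:ℚ) 0 := rfl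
            rw [this]
        _ = (∑ k ∈ Finset.range (n + 2), FCch (x + p * k) k * FCA p (y:ℚ) ((n+1) - k))
            + (∑ k ∈ Finset.range (n + 1), FCch (x + p * k) k * FCA p ((y:ℚ) + p) (n - k)) := by
            conv_rhs => rw [Finset.sum_range_succ]
            rw [Nat.sub_self]
            ring
        _ = FCch (x + y + p * ((n+1:ℕ):ℚ)) (n+1) + FCch (x + ((y:ℚ) + p) + p * ((n:ℕ):ℚ)) n := by
            rw [ihy x]
            have := ih (y + p) x
            rw [cast2] at this
            rw [this]
        _ = FCch (x + ((y + 1 : ℕ):ℚ) + p * ((n+1 : ℕ):ℚ)) (n+1) := by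
            have e1 : x + ((y:ℚ) + (p:ℚ)) + (p:ℚ) * ((n:ℕ):ℚ)
                = x + (y:ℚ) + (p:ℚ) * ((n+1:ℕ):ℚ) := by push_cast; ring
            have e2 : x + ((y+1:ℕ):ℚ) + (p:ℚ) * ((n+1:ℕ):ℚ)
                = (x + (y:ℚ) + (p:ℚ) * ((n+1:ℕ):ℚ)) + 1 := by push_cast; ring
            rw [e1, e2, FCch_pascal]

lemma FCcoeff_one_sub_X_pow (q : ℕ) : ∀ m : ℕ,
    PowerSeries.coeff m ((1 - X : ℚ⟦X⟧) ^ q) = (-1) ^ m * (q.choose m : ℚ) := by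
  induction q with
  | zero =>
    intro m
    cases m with
    | zero => simp
    | succ m => simp
  | succ q ih =>
    intro m
    rw [pow_succ, mul_sub, mul_one, map_sub]
    cases m with
    | zero =>
      rw [PowerSeries.coeff_zero_mul_X, ih 0]
      simp
    | succ m =>
      rw [PowerSeries.coeff_succ_mul_X, ih (m+1), ih m, Nat.choose_succ_succ]
      push_cast
      ring

lemma FCcoeff_phi_pow (p : ℕ) (j n : ℕ) (hj : j ≤ n) :
    PowerSeries.coeff n ((X * (1 - X) ^ (p - 1) : ℚ⟦X⟧) ^ j)
      = (-1) ^ (n - j) * (((p-1) * j).choose (n - j) : ℚ) := by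
  rw [mul_pow, ← pow_mul, PowerSeries.coeff_X_pow_mul', if_pos hj, FCcoeff_one_sub_X_pow]

lemma FCgeom : ((1 - X : ℚ⟦X⟧))⁻¹ = PowerSeries.mk (fun _ => 1) := by
  rw [PowerSeries.inv_eq_iff_mul_eq_one (by simp)]
  ext n
  rw [mul_sub, mul_one, map_sub]
  cases n with
  | zero => rw [PowerSeries.coeff_zero_mul_X]; simp
  | succ n => rw [PowerSeries.coeff_succ_mul_X]; simp

/-- The p-th order Fuss–Catalan generating function satisfies
`F_p(X·(1-X)^{p-1}) = 1/(1-X)`. -/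
theorem fuss_catalan_comp (p : ℕ) (hp : 1 ≤ p) (F : ℚ⟦X⟧)
    (hF : ∀ n : ℕ,
      coeff n F = (1 : ℚ) / (((p - 1) * n + 1 : ℕ) : ℚ) * (Nat.choose (p * n) n : ℚ)) :
    F.comp (X * (1 - X) ^ (p - 1)) = (1 - X)⁻¹ := by
  rw [FCgeom]
  ext n
  simp only [PowerSeries.comp, PowerSeries.coeff_mk]
  set x : ℚ := (n : ℚ) - p * n - 1 with hx
  have key := FCrothe p hp n 1 x
  simp only [Nat.cast_one] at key
  have hterm : ∀ j ∈ Finset.range (n + 1),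
      (coeff j F) * PowerSeries.coeff n ((X * (1 - X) ^ (p - 1)) ^ j)
        = (fun k => FCch (x + p * (k : ℕ)) k * FCA p 1 (n - k)) (n - j) := by
    intro j hj
    have hj' : j ≤ n := by have := Finset.mem_range.mp hj; omega
    show _ = FCch (x + p * ((n - j : ℕ) : ℚ)) (n - j) * FCA p 1 (n - (n - j))
    rw [Nat.sub_sub_self hj', hF j, FCcoeff_phi_pow p j n hj', ← FCA_one p hp j]
    have c1 : ((n - j : ℕ) : ℚ) = (n : ℚ) - j := by rw [Nat.cast_sub hj']
    have c2 : (((p - 1) * j : ℕ) : ℚ) = ((p : ℚ) - 1) * j := by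
      rw [Nat.cast_mul, Nat.cast_sub hp]; push_cast; ring
    have harg : x + (p : ℚ) * ((n - j : ℕ) : ℚ)
        = ((n - j : ℕ) : ℚ) - (((p - 1) * j : ℕ) : ℚ) - 1 := by
      rw [c1, c2, hx]; ring
    rw [harg, FCch_reflect ((p - 1) * j) (n - j)]
    ring
  rw [Finset.sum_congr rfl hterm]
  have hrefl2 := Finset.sum_range_reflect
    (fun k => FCch (x + p * (k : ℕ)) k * FCA p 1 (n - k)) (n + 1)
  simp only [Nat.add_sub_cancel] at hrefl2
  rw [hrefl2, key]
  have : x + 1 + (p : ℚ) * n = ((n : ℕ) : ℚ) := by rw [hx]; ring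
  rw [this, FCch_nat, Nat.choose_self, Nat.cast_one]
end

section
/- Let p ≥ 1 be an integer and define F_p ∈ ℚ⟦X⟧ by [X^n]F_p = (1/((p−1)n+1))·C(pn, n). Then F_p = 1 + X·F_p^p. -/
open PowerSeries Finset

noncomputable def fc (p t n : ℕ) : ℚ :=
  if n = 0 then 1 else (t : ℚ) / ((p * n + t : ℕ) : ℚ) * ((p * n + t).choose n : ℚ)

lemma fc_zero (p t : ℕ) : fc p t 0 = 1 := by simp [fc]

lemma fc_eq (p t n : ℕ) (h : p * n + t ≠ 0) :
    fc p t n = (t : ℚ) / ((p * n + t : ℕ) : ℚ) * ((p * n + t).choose n : ℚ) := by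
  rcases Nat.eq_zero_or_pos n with hn | hn
  · subst hn
    simp only [Nat.mul_zero, Nat.zero_add] at h ⊢
    have ht : (t : ℚ) ≠ 0 := by exact_mod_cast h
    simp [fc, div_self ht]
  · simp [fc, hn.ne']

lemma fc_zero_left (p n : ℕ) (hn : n ≠ 0) : fc p 0 n = 0 := by
  simp [fc, hn]

lemma fc_recur (p : ℕ) (hp : 1 ≤ p) (t n : ℕ) :
    fc p (t + 1) (n + 1) = fc p t (n + 1) + fc p (t + p) n := by
  rw [fc_eq p (t+1) (n+1) (by positivity), fc_eq p t (n+1) (by positivity),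
    fc_eq p (t+p) n (by positivity)]
  obtain ⟨M, hM⟩ : ∃ M, M = p * (n + 1) + t := ⟨_, rfl⟩
  have e1 : p * (n + 1) + (t + 1) = M + 1 := by rw [hM]; ring
  have e2 : p * n + (t + p) = M := by rw [hM]; ring
  have hM0 : M ≠ 0 := by rw [hM]; positivity
  have hMn : n ≤ M := by
    have h1 : n + 1 ≤ p * (n + 1) := Nat.le_mul_of_pos_left (n + 1) hp
    omega
  rw [e1, e2, ← hM]
  have hpascal : ((M + 1).choose (n + 1) : ℚ) = (M.choose n : ℚ) + (M.choose (n+1) : ℚ) := by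
    exact_mod_cast congrArg (Nat.cast (R := ℚ)) (Nat.choose_succ_succ M n)
  have hratio : (M.choose (n + 1) : ℚ) * ((n : ℚ) + 1) = (M.choose n : ℚ) * ((M : ℚ) - n) := by
    rw [← Nat.cast_sub hMn]
    exact_mod_cast Nat.choose_succ_right_eq M n
  have hMQ : (M : ℚ) = (p : ℚ) * ((n : ℚ) + 1) + t := by rw [hM]; push_cast; ring
  have hM0' : (M : ℚ) ≠ 0 := by exact_mod_cast hM0
  have hM1' : ((M : ℚ) + 1) ≠ 0 := by positivity
  rw [hpascal]
  push_cast
  rw [div_mul_eq_mul_div, div_mul_eq_mul_div, div_mul_eq_mul_div, ← add_div,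
    div_eq_div_iff hM1' hM0']
  linear_combination ((p : ℚ)) * hratio +
    (((M.choose n : ℚ) + (M.choose (n+1) : ℚ))) * hMQ

lemma fc_conv (p : ℕ) (hp : 1 ≤ p) (s : ℕ) :
    ∀ n t, ∑ k ∈ Finset.range (n + 1), fc p s k * fc p t (n - k) = fc p (s + t) n := by
  intro n
  induction n using Nat.strong_induction_on with
  | _ n ih =>
    intro t
    match n with
    | 0 => simp [fc_zero]
    | (m+1) =>
      induction t with
      | zero =>
        rw [Finset.sum_eq_single (m+1)]
        · simp [fc_zero]
        · intro k hk hkne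
          have hk' : k < m + 2 := Finset.mem_range.mp hk
          rw [fc_zero_left p _ (by omega)]
          ring
        · intro h; exact absurd (Finset.self_mem_range_succ (m+1)) h
      | succ t iht =>
        have key : ∑ k ∈ Finset.range (m + 1 + 1), fc p s k * fc p (t+1) (m + 1 - k)
            = (∑ k ∈ Finset.range (m + 1 + 1), fc p s k * fc p t (m + 1 - k))
              + ∑ k ∈ Finset.range (m + 1), fc p s k * fc p (t + p) (m - k) := by
          rw [Finset.sum_range_succ, Finset.sum_range_succ (n := m+1)
            (f := fun k => fc p s k * fc p t (m + 1 - k))]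
          have h1 : ∀ k ∈ Finset.range (m+1),
              fc p s k * fc p (t+1) (m + 1 - k)
                = fc p s k * fc p t (m + 1 - k) + fc p s k * fc p (t + p) (m - k) := by
            intro k hk
            have hk' : k ≤ m := Nat.lt_succ_iff.mp (Finset.mem_range.mp hk)
            have hd : m + 1 - k = (m - k) + 1 := by omega
            rw [hd, fc_recur p hp t (m-k)]
            ring
          rw [Finset.sum_congr rfl h1, Finset.sum_add_distrib]
          simp only [Nat.sub_self, fc_zero]
          ring
        rw [key, iht, ih m (by omega) (t + p)]
        rw [show s + (t + p) = s + t + p from (Nat.add_assoc s t p).symm,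
          show s + (t + 1) = (s + t) + 1 from (Nat.add_assoc s t 1).symm]
        exact (fc_recur p hp (s + t) m).symm

lemma fc_shift (p : ℕ) (hp : 1 ≤ p) (n : ℕ) : fc p 1 (n + 1) = fc p p n := by
  have hpos : 0 < p * n + p := by positivity
  rw [fc_eq p 1 (n+1) (by positivity), fc_eq p p n (by omega),
    show p * (n + 1) + 1 = p * n + p + 1 from by ring]
  have key : ((p*n+p+1 : ℕ) : ℚ) * ((p*n+p).choose n : ℚ)
      = ((p*n+p+1).choose (n+1) : ℚ) * ((n : ℚ) + 1) := by
    exact_mod_cast congrArg (Nat.cast (R := ℚ)) (Nat.add_one_mul_choose_eq (p*n+p) n)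
  have h1 : ((p*n+p+1 : ℕ) : ℚ) ≠ 0 := by positivity
  have h2 : ((p*n+p : ℕ) : ℚ) ≠ 0 := by
    exact_mod_cast hpos.ne'
  push_cast at key ⊢
  field_simp
  linear_combination (-1 : ℚ) * key

/-- The p-th order Fuss–Catalan generating function satisfies
`F_p = 1 + X·F_p^p`. -/
theorem fuss_catalan_functional_equation (p : ℕ) (hp : 1 ≤ p) (F : ℚ⟦X⟧)
    (hF : ∀ n : ℕ,
      coeff n F = (1 : ℚ) / (((p - 1) * n + 1 : ℕ) : ℚ) * (Nat.choose (p * n) n : ℚ)) :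
    F = 1 + X * F ^ p := by
  have hF1 : ∀ n, coeff n F = fc p 1 n := by
    intro n
    rw [hF n, fc_eq p 1 n (by positivity)]
    have hn : n ≤ p * n := Nat.le_mul_of_pos_left n hp
    have harg : (p - 1) * n + 1 = p * n + 1 - n := by
      rw [Nat.sub_mul, Nat.one_mul, Nat.succ_sub hn]
    rw [harg]
    have hkey : ((p*n).choose n : ℚ) * (((p*n : ℕ) : ℚ) + 1)
        = (((p*n+1).choose n : ℚ)) * (((p*n + 1 - n : ℕ)) : ℚ) := by
      exact_mod_cast congrArg (Nat.cast (R := ℚ)) (Nat.choose_mul_succ_eq (p*n) n)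
    have h1 : ((p*n + 1 - n : ℕ) : ℚ) ≠ 0 := by
      have : 0 < p * n + 1 - n := by omega
      exact_mod_cast this.ne'
    have h2 : ((p*n+1 : ℕ) : ℚ) ≠ 0 := by positivity
    rw [show ((p*n+1 : ℕ) : ℚ) = ((p*n : ℕ) : ℚ) + 1 from by push_cast; ring] at h2 ⊢
    push_cast at hkey h1 h2 ⊢
    field_simp
    linear_combination hkey
  have hpow : ∀ s n, coeff n (F ^ s) = fc p s n := by
    intro s
    induction s with
    | zero =>
      intro n
      rw [pow_zero, coeff_one]
      match n with
      | 0 => simp [fc_zero]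
      | (m+1) => simp [fc_zero_left p (m+1) (by omega)]
    | succ s ihs =>
      intro n
      rw [pow_succ, coeff_mul, Finset.Nat.sum_antidiagonal_eq_sum_range_succ_mk]
      simp only [ihs, hF1]
      exact fc_conv p hp s n 1
  ext n
  match n with
  | 0 =>
    simp only [map_add, coeff_zero_eq_constantCoeff, map_mul, constantCoeff_X, zero_mul,
      map_one, add_zero]
    rw [← coeff_zero_eq_constantCoeff_apply, hF1 0, fc_zero]
  | (m+1) =>
    rw [map_add, PowerSeries.coeff_succ_X_mul, hpow p m, hF1 (m+1), coeff_one,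
      if_neg (by omega : m + 1 ≠ 0), fc_shift p hp m, zero_add]
end

section
/- Let p ≥ 1 and r ≥ 1 be integers and define F_p ∈ ℚ⟦X⟧ by [X^n]F_p = (1/((p−1)n+1))·C(pn, n). Then for every n ≥ 0, the n-th coefficient of F_p^r equals (r/(pn+r))·C(pn+r, n). -/
open PowerSeries


private def fcC (p n r : ℕ) : ℚ :=
  (r : ℚ) / ((p * n + r : ℕ) : ℚ) * (Nat.choose (p * n + r) n : ℚ)

private lemma fc_key (m n : ℕ) (hn : 1 ≤ n) (hm : n ≤ m) :
    (m.choose n : ℚ) * n = (m.choose (n - 1) : ℚ) * ((m : ℚ) - n + 1) := by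
  obtain ⟨k, rfl⟩ : ∃ k, n = k + 1 := ⟨n - 1, by omega⟩
  have h := Nat.choose_succ_right_eq m k
  have hkm : k ≤ m := by omega
  have h2 : ((m.choose (k+1) * (k+1) : ℕ) : ℚ) = ((m.choose k * (m - k) : ℕ) : ℚ) := by
    rw [h]
  push_cast [Nat.cast_sub hkm] at h2
  simp only [Nat.add_sub_cancel]
  push_cast
  linarith [h2]

private lemma fc_czero (p n : ℕ) : fcC p n 0 = 0 := by simp [fcC]

private lemma fc_step (p n r : ℕ) (hp : 1 ≤ p) (hn : 1 ≤ n) :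
    fcC p n (r + 1) = fcC p n r + fcC p (n - 1) (p + r) := by
  have hidx : p * (n - 1) + (p + r) = p * n + r := by
    obtain ⟨k, rfl⟩ : ∃ k, n = k + 1 := ⟨n - 1, by omega⟩
    simp [Nat.mul_succ]
    ring
  have hnm : n ≤ p * n + r := le_add_right (Nat.le_mul_of_pos_left n (by omega))
  have key := fc_key (p * n + r) n hn hnm
  have pascal : ((p*n+r+1).choose n : ℚ)
      = ((p*n+r).choose (n-1) : ℚ) + ((p*n+r).choose n : ℚ) := by
    obtain ⟨k, rfl⟩ : ∃ k, n = k + 1 := ⟨n - 1, by omega⟩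
    rw [Nat.choose_succ_succ]
    push_cast
    simp
  have hm0 : ((p*n+r : ℕ) : ℚ) ≠ 0 := by
    have h1 : 1 ≤ p * n + r := le_trans hn hnm
    have : (p*n+r : ℕ) ≠ 0 := by omega
    exact_mod_cast this
  have hm1 : ((p*n+r : ℕ) : ℚ) + 1 ≠ 0 := by positivity
  unfold fcC
  rw [hidx]
  push_cast [show p*n+(r+1) = (p*n+r)+1 from rfl] at *
  rw [pascal]
  field_simp
  ring_nf
  ring_nf at key pascal
  nlinarith [key, sq_nonneg ((p:ℚ)*n+r)]

private lemma fc_base (p n : ℕ) (hp : 1 ≤ p) :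
    (1 : ℚ) / (((p - 1) * n + 1 : ℕ) : ℚ) * (Nat.choose (p * n) n : ℚ) = fcC p n 1 := by
  rcases Nat.eq_zero_or_pos n with rfl | hn
  · simp [fcC]
  · have hnm : n ≤ p * n := Nat.le_mul_of_pos_left n (by omega)
    have key := fc_key (p * n) n hn hnm
    have pascal : ((p*n+1).choose n : ℚ)
        = ((p*n).choose (n-1) : ℚ) + ((p*n).choose n : ℚ) := by
      obtain ⟨k, rfl⟩ : ∃ k, n = k + 1 := ⟨n - 1, by omega⟩
      rw [Nat.choose_succ_succ]
      push_cast
      simp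
    have hcast : (((p - 1) * n + 1 : ℕ) : ℚ) = (p : ℚ) * n - n + 1 := by
      have : (p-1) * n = p * n - n := by
        obtain ⟨q, rfl⟩ : ∃ q, p = q + 1 := ⟨p - 1, by omega⟩
        simp [Nat.succ_mul]
      rw [this]
      push_cast [Nat.cast_sub (Nat.le_mul_of_pos_left n (by omega : 0 < p))]
      ring
    have hd1 : (p : ℚ) * n - n + 1 ≠ 0 := by
      have : (n : ℚ) ≤ (p:ℚ) * n := by
        exact_mod_cast hnm
      nlinarith
    have hd2 : ((p*n : ℕ) : ℚ) + 1 ≠ 0 := by positivity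
    unfold fcC
    rw [hcast]
    push_cast [show p*n+1 = (p*n)+1 from rfl] at *
    rw [pascal]
    field_simp
    have hd3 : (n:ℚ) * ((p:ℚ) - 1) + 1 ≠ 0 := by
      intro h; apply hd1; linarith
    rw [div_eq_iff hd3]
    nlinarith [key]

private lemma fc_shift_s12 (p k : ℕ) (hp : 1 ≤ p) :
    (1 : ℚ) / (((p - 1) * (k+1) + 1 : ℕ) : ℚ) * (Nat.choose (p * (k+1)) (k+1) : ℚ)
      = fcC p k p := by
  rw [fc_base p (k+1) hp, fc_step p (k+1) 0 hp (by omega)]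
  simp [fc_czero]

private lemma fc_def (p n r : ℕ) : fcC p n r
    = (r : ℚ) / ((p * n + r : ℕ) : ℚ) * (Nat.choose (p * n + r) n : ℚ) := rfl

/-- Lambert's formula for the powers of the p-th order Fuss–Catalan generating
function: `[Xⁿ](F_p^r) = (r/(pn+r))·C(pn+r, n)`. -/
theorem fuss_catalan_power (p r : ℕ) (hp : 1 ≤ p) (hr : 1 ≤ r) (F : ℚ⟦X⟧)
    (hF : ∀ n : ℕ,
      coeff n F = (1 : ℚ) / (((p - 1) * n + 1 : ℕ) : ℚ) * (Nat.choose (p * n) n : ℚ)) :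
    ∀ n : ℕ,
      coeff n (F ^ r) =
        ((r : ℚ) / ((p * n + r : ℕ) : ℚ)) * (Nat.choose (p * n + r) n : ℚ) := by
  have hF0 : coeff 0 F = 1 := by
    rw [hF 0]; simp
  suffices h : ∀ n : ℕ, ∀ r : ℕ, 1 ≤ r → coeff n (F ^ r) = fcC p n r by
    intro n
    rw [h n r hr, fc_def]
  intro n
  induction n using Nat.strong_induction_on with
  | _ n IH =>
    rcases Nat.eq_zero_or_pos n with rfl | hn
    · intro r hr
      have : coeff 0 (F ^ r) = 1 := by
        rw [coeff_zero_eq_constantCoeff, map_pow]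
        rw [← coeff_zero_eq_constantCoeff_apply, hF0, one_pow]
      rw [this, fc_def]
      have : ((r:ℕ):ℚ) ≠ 0 := by exact_mod_cast (by omega : r ≠ 0)
      simp [div_self this]
    · intro r hr
      induction r, hr using Nat.le_induction with
      | base => rw [pow_one, hF n, fc_base p n hp]
      | succ r hr ih =>
        rw [pow_succ', coeff_mul, Finset.Nat.sum_antidiagonal_eq_sum_range_succ_mk,
          Finset.sum_range_succ']
        have hsum : ∑ k ∈ Finset.range n,
            coeff (k+1) F * coeff (n - (k+1)) (F ^ r)
            = fcC p (n-1) (p + r) := by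
          have hrw : ∀ k ∈ Finset.range n,
              coeff (k+1) F * coeff (n - (k+1)) (F ^ r)
                = coeff k (F ^ p) * coeff ((n-1) - k) (F ^ r) := by
            intro k hk
            rw [Finset.mem_range] at hk
            rw [hF (k+1), fc_shift_s12 p k hp, show n - (k+1) = (n-1) - k from by omega,
              ← IH k (by omega) p hp]
          rw [Finset.sum_congr rfl hrw]
          have : ∑ k ∈ Finset.range n, coeff k (F ^ p) * coeff ((n-1) - k) (F ^ r)
              = coeff (n-1) (F ^ (p + r)) := by
            rw [pow_add, coeff_mul, Finset.Nat.sum_antidiagonal_eq_sum_range_succ_mk,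
              show (n-1).succ = n from by omega]
          rw [this, IH (n-1) (by omega) (p+r) (by omega)]
        rw [hsum, hF0, Nat.sub_zero, ih, one_mul, fc_step p n r hp hn]
        ring
end

section
/- For all integers p ≥ 1, r ≥ 0 and 1 ≤ s ≤ k ≤ n, the following identity holds in ℚ: Σ_{j=s}^{n−k+s} (s/j) · C(pj, j−s) · C(p(n−j)+r, n+s−j−k) = C(pn+r, n−k). -/
def rothA (x z : ℕ) : ℕ → ℚ
  | 0 => 1
  | i+1 => (Nat.choose (x + (i+1)*z) (i+1) : ℚ) - z * Nat.choose (x + (i+1)*z - 1) i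

lemma choose_mul_eq (M i : ℕ) (hM : 1 ≤ M) :
    ((i+1 : ℕ) : ℚ) * Nat.choose M (i+1) = M * Nat.choose (M-1) i := by
  obtain ⟨n, rfl⟩ : ∃ n, M = n + 1 := ⟨M - 1, by omega⟩
  have h : (i+1) * Nat.choose (n+1) (i+1) = (n+1) * Nat.choose n i := by
    rw [mul_comm]; exact (Nat.add_one_mul_choose_eq n i).symm
  have h2 : n + 1 - 1 = n := by omega
  rw [h2]
  exact_mod_cast congrArg (Nat.cast : ℕ → ℚ) h

lemma rothA_zero (z : ℕ) (i : ℕ) : rothA 0 z (i+1) = 0 := by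
  rcases Nat.eq_zero_or_pos z with hz | hz
  · simp [rothA, hz]
  · have hM : 1 ≤ (i+1)*z := Nat.mul_pos (Nat.succ_pos i) hz
    have key := choose_mul_eq ((i+1)*z) i hM
    have hi : ((i:ℚ)+1) ≠ 0 := by positivity
    simp only [rothA, Nat.zero_add]
    refine mul_left_cancel₀ hi ?_
    push_cast at key ⊢
    linarith [key]

lemma rothA_rec (x z : ℕ) (hz : 1 ≤ z) (i : ℕ) :
    rothA (x+1) z (i+1) = rothA x z (i+1) + rothA (x+z) z i := by
  cases i with
  | zero =>
      simp only [rothA]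
      have h1 : x + 1 + 1*z - 1 = x + z := by omega
      have h2 : x + 1*z - 1 = x + z - 1 := by omega
      rw [h1, h2]
      simp [Nat.choose_one_right]
  | succ i =>
      simp only [rothA]
      have hM : 1 ≤ x + (i+1+1)*z := by have h := Nat.mul_le_mul (show 1 ≤ i+1+1 by omega) hz; omega
      obtain ⟨N, hN⟩ : ∃ N, x + (i+1+1)*z = N + 1 := ⟨x + (i+1+1)*z - 1, by omega⟩
      have e2 : x + 1 + (i+1+1)*z - 1 = N + 1 := by omega
      have e1 : x + 1 + (i+1+1)*z = N + 1 + 1 := by omega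
      have e3 : x + (i+1+1)*z - 1 = N := by omega
      have e4 : x + z + (i+1)*z = N + 1 := by rw [← hN]; ring
      have e5 : x + z + (i+1)*z - 1 = N := by omega
      rw [e2, e1, e3, hN, e5, e4]
      have p1 : ((N+1+1).choose (i+1+1) : ℚ) = (N+1).choose (i+1) + (N+1).choose (i+1+1) := by
        exact_mod_cast Nat.choose_succ_succ (N+1) (i+1)
      have p2 : ((N+1).choose (i+1) : ℚ) = N.choose i + N.choose (i+1) := by
        exact_mod_cast Nat.choose_succ_succ N i
      rw [p1, p2]; ring

/-- Rothe's one-sided convolution identity for the `rothA` numbers. -/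
lemma rothA_sum (z : ℕ) (hz : 1 ≤ z) (y : ℕ) : ∀ m x,
    ∑ i ∈ Finset.range (m+1),
        rothA x z i * (Nat.choose (y + (m-i)*z) (m-i) : ℚ)
      = Nat.choose (x+y+m*z) m := by
  intro m
  induction m with
  | zero => intro x; simp [rothA]
  | succ m ih =>
    intro x
    induction x with
    | zero =>
        rw [Finset.sum_eq_single 0]
        · simp [rothA]
        · intro i _ hi
          obtain ⟨i', rfl⟩ : ∃ i', i = i' + 1 := ⟨i - 1, by omega⟩
          rw [rothA_zero]; ring
        · simp
    | succ x ihx =>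
        rw [Finset.sum_range_succ']
        have step : ∀ i ∈ Finset.range (m+1),
            rothA (x+1) z (i+1) * (Nat.choose (y + (m+1-(i+1))*z) (m+1-(i+1)) : ℚ)
            = rothA x z (i+1) * (Nat.choose (y + (m+1-(i+1))*z) (m+1-(i+1)) : ℚ)
              + rothA (x+z) z i * (Nat.choose (y + (m-i)*z) (m-i) : ℚ) := by
          intro i _
          have h : m + 1 - (i+1) = m - i := by omega
          rw [h, rothA_rec x z hz i]; ring
        rw [Finset.sum_congr rfl step, Finset.sum_add_distrib]
        have hA0 : rothA (x+1) z 0 = rothA x z 0 := rfl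
        rw [hA0, add_right_comm, ← Finset.sum_range_succ' (fun i =>
          rothA x z i * (Nat.choose (y + (m+1-i)*z) (m+1-i) : ℚ)) (m+1)]
        rw [ihx, ih (x+z)]
        have e1 : x + z + y + m*z = x + y + (m+1)*z := by ring
        rw [e1]
        have e3 : ((x+1+y+(m+1)*z).choose (m+1) : ℚ)
            = (x+y+(m+1)*z).choose m + (x+y+(m+1)*z).choose (m+1) := by
          have e2 : x+1+y+(m+1)*z = (x+y+(m+1)*z) + 1 := by omega
          rw [e2]
          exact_mod_cast Nat.choose_succ_succ (x+y+(m+1)*z) m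
        rw [e3]; ring

/-- The division form of the Rothe numbers. -/
lemma rothA_div (s p i : ℕ) (hs : 1 ≤ s) (hp : 1 ≤ p) :
    ((s : ℚ) / ((s+i : ℕ) : ℚ)) * (Nat.choose (p*(s+i)) i : ℚ) = rothA (p*s) p i := by
  cases i with
  | zero =>
      have h : (s:ℚ) ≠ 0 := by positivity
      simp [rothA, h]
  | succ i =>
      have hM : 1 ≤ p*(s+(i+1)) := by
        have := Nat.mul_le_mul hp (show 1 ≤ s+(i+1) by omega); omega
      have key := choose_mul_eq (p*(s+(i+1))) i hM
      have eM : p*s + (i+1)*p = p*(s+(i+1)) := by ring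
      simp only [rothA, eM]
      have hsi : ((s:ℚ)+((i:ℚ)+1)) ≠ 0 := by positivity
      have hcast : ((s+(i+1) : ℕ) : ℚ) = (s:ℚ)+((i:ℚ)+1) := by push_cast; ring
      rw [hcast, div_mul_eq_mul_div, div_eq_iff hsi]
      push_cast at key ⊢
      nlinarith [key]

/-- Column decomposition applied to the one-p-th horizontal array of the Pascal
matrix: `Σ_{j=s}^{n-k+s} (s/j)·C(pj, j-s)·C(p(n-j)+r, n+s-j-k) = C(pn+r, n-k)`. -/
theorem one_pth_pascal_column_identity (p r n k s : ℕ) (hp : 1 ≤ p) (hs : 1 ≤ s)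
    (hsk : s ≤ k) (hkn : k ≤ n) :
    ∑ j ∈ Finset.Icc s (n - k + s),
        ((s : ℚ) / (j : ℚ)) * (Nat.choose (p * j) (j - s) : ℚ) *
          (Nat.choose (p * (n - j) + r) (n + s - j - k) : ℚ) =
      (Nat.choose (p * n + r) (n - k) : ℚ) := by
  have main := rothA_sum p hp (p*(k-s)+r) (n-k) (p*s)
  have hE : p*s + (p*(k-s)+r) + (n-k)*p = p*n + r := by
    have h1 : s + (k-s) + (n-k) = n := by omega
    calc p*s + (p*(k-s)+r) + (n-k)*p = p*(s+(k-s)+(n-k)) + r := by ring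
      _ = p*n + r := by rw [h1]
  rw [hE] at main
  rw [← main]
  refine Finset.sum_nbij' (fun j => j - s) (fun i => i + s) ?_ ?_ ?_ ?_ ?_
  · intro j hj; simp only [Finset.mem_Icc] at hj; simp only [Finset.mem_range]; omega
  · intro i hi; simp only [Finset.mem_range] at hi; simp only [Finset.mem_Icc]; omega
  · intro j hj; simp only [Finset.mem_Icc] at hj; show j - s + s = j; omega
  · intro i hi; simp only [Finset.mem_range] at hi; show i + s - s = i; omega
  · intro j hj
    simp only [Finset.mem_Icc] at hj
    obtain ⟨i, rfl⟩ : ∃ i, j = s + i := ⟨j - s, by omega⟩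
    have h1 : s + i - s = i := by omega
    have h2 : n + s - (s+i) - k = n - k - i := by omega
    have h3 : p*(k-s)+r + (n-k-i)*p = p*(n-(s+i)) + r := by
      have h4 : (k-s) + (n-k-i) = n-(s+i) := by omega
      calc p*(k-s)+r + (n-k-i)*p = p*((k-s)+(n-k-i)) + r := by ring
        _ = p*(n-(s+i)) + r := by rw [h4]
    beta_reduce
    rw [h1, h2, ← rothA_div s p i hs hp, h3]
end

section
/- For all integers p ≥ 1, r ≥ 0 and 1 ≤ k ≤ n, the following identity holds in ℚ: Σ_{j=0}^{n−k+1} (1/(pj+1)) · C(pj+1, j) · C(p(n−j)+r, n+1−j−k) = C(pn+r+1, n−k+1). -/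
open Finset

/-- `rotheP p x j = (x/(x+pj))·C(x+pj, j)`, in division-free form. -/
def rotheP (p x : ℕ) : ℕ → ℚ
  | 0 => 1
  | (j+1) => (x : ℚ) * (Nat.choose (x + p * (j+1) - 1) j : ℚ) / (j+1)

lemma rotheP_succ (p : ℕ) (hp : 1 ≤ p) (x j : ℕ) :
    rotheP p (x+1) (j+1) = rotheP p x (j+1) + rotheP p (x+p) j := by
  cases j with
  | zero =>
    simp [rotheP]
  | succ j =>
    simp only [rotheP]
    have hm : p * (j + 1 + 1) = p * (j + 1) + p := by ring
    have hge : j + 2 ≤ p * (j + 2) := Nat.le_mul_of_pos_left _ hp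
    have hm2 : p * (j + 2) = p * (j + 1) + p := by ring
    set N := x + p * (j+2) - 1 with hNdef
    have h1 : x + 1 + p * (j + 1 + 1) - 1 = N + 1 := by omega
    have h2 : x + p + p * (j + 1) - 1 = N := by omega
    have hNj : j ≤ N := by omega
    rw [h1, h2]
    have hb : (Nat.choose N (j+1) : ℚ) * (j+1) = (Nat.choose N j : ℚ) * ((N : ℚ) - j) := by
      have := Nat.choose_succ_right_eq N j
      have hcast : ((Nat.choose N (j+1) * (j+1) : ℕ) : ℚ) = ((Nat.choose N j * (N - j) : ℕ) : ℚ) := by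
        exact_mod_cast congrArg Nat.cast this
      push_cast [Nat.cast_sub hNj] at hcast
      exact_mod_cast hcast
    have hc : (Nat.choose (N+1) (j+1) : ℚ) = (Nat.choose N j : ℚ) + (Nat.choose N (j+1) : ℚ) := by
      push_cast [Nat.choose_succ_succ]
      ring
    have hN : (N : ℚ) = (x : ℚ) + p * ((j:ℚ)+2) - 1 := by
      have h3 : (N : ℕ) + 1 = x + p * (j+2) := by omega
      have := congrArg (Nat.cast (R := ℚ)) h3
      push_cast at this
      linarith
    have hj1 : ((j : ℚ) + 1 + 1) ≠ 0 := by positivity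
    have hj2 : ((j : ℚ) + 1) ≠ 0 := by positivity
    field_simp
    rw [hc]
    push_cast
    linear_combination (1:ℚ) * hb + (1:ℚ) * (Nat.choose N j : ℚ) * hN

lemma rothe_key (p : ℕ) (hp : 1 ≤ p) (m : ℕ) : ∀ x y : ℕ,
    ∑ j ∈ Finset.range (m+1),
      rotheP p x j * ((Nat.choose (y + p * (m - j)) (m - j) : ℚ)) =
      (Nat.choose (x + y + p * m) m : ℚ) := by
  induction m with
  | zero => intro x y; simp [rotheP]
  | succ m ih =>
    intro x
    induction x with
    | zero =>
      intro y
      rw [Finset.sum_eq_single 0]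
      · simp [rotheP]
      · intro j hj hj0
        obtain ⟨j', rfl⟩ := Nat.exists_eq_succ_of_ne_zero hj0
        simp [rotheP]
      · intro h; simp at h
    | succ x ihx =>
      intro y
      rw [Finset.sum_range_succ']
      have hsplit : ∀ j ∈ Finset.range (m+1),
          rotheP p (x+1) (j+1) * ((Nat.choose (y + p * (m + 1 - (j+1))) (m + 1 - (j+1)) : ℚ))
          = rotheP p x (j+1) * ((Nat.choose (y + p * (m + 1 - (j+1))) (m + 1 - (j+1)) : ℚ))
            + rotheP p (x+p) j * ((Nat.choose (y + p * (m - j)) (m - j) : ℚ)) := by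
        intro j hj
        rw [rotheP_succ p hp x j]
        have : m + 1 - (j+1) = m - j := by omega
        rw [this]
        ring
      rw [Finset.sum_congr rfl hsplit, Finset.sum_add_distrib]
      rw [ih (x+p) y]
      have h0 : rotheP p (x+1) 0 = rotheP p x 0 := rfl
      have hre : (∑ j ∈ Finset.range (m+1),
          rotheP p x (j+1) * ((Nat.choose (y + p * (m + 1 - (j+1))) (m + 1 - (j+1)) : ℚ)))
          + rotheP p (x+1) 0 * ((Nat.choose (y + p * (m + 1 - 0)) (m + 1 - 0) : ℚ))
          = ∑ j ∈ Finset.range (m+2),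
          rotheP p x j * ((Nat.choose (y + p * (m + 1 - j)) (m + 1 - j) : ℚ)) := by
        rw [h0]
        exact (Finset.sum_range_succ' (fun j => rotheP p x j * ((Nat.choose (y + p * (m + 1 - j)) (m + 1 - j) : ℚ))) (m+1)).symm
      have goal2 : (Nat.choose (x + p + y + p * m) m : ℚ)
          = (Nat.choose (x + y + p * (m+1)) m : ℚ) := by
        congr 2
        ring
      rw [add_right_comm, hre, ihx y, goal2]
      have : x + 1 + y + p * (m+1) = (x + y + p * (m+1)) + 1 := by omega
      rw [this, Nat.choose_succ_succ' ]
      push_cast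
      ring

/-- The `s = 1` case of the column decomposition of the one-p-th horizontal
array of the Pascal matrix, with the `j = 0` term added to both sides:
`Σ_{j=0}^{n-k+1} (1/(pj+1))·C(pj+1, j)·C(p(n-j)+r, n+1-j-k) = C(pn+r+1, n-k+1)`. -/
theorem one_pth_fuss_catalan_convolution (p r n k : ℕ) (hp : 1 ≤ p) (hk : 1 ≤ k)
    (hkn : k ≤ n) :
    ∑ j ∈ Finset.range (n - k + 2),
        ((1 : ℚ) / ((p * j + 1 : ℕ) : ℚ)) * (Nat.choose (p * j + 1) j : ℚ) *
          (Nat.choose (p * (n - j) + r) (n + 1 - j - k) : ℚ) =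
      (Nat.choose (p * n + r + 1) (n - k + 1) : ℚ) := by
  set m := n - k + 1 with hm
  have key := rothe_key p hp m 1 (p * (k-1) + r)
  have hrhs : 1 + (p * (k-1) + r) + p * m = p * n + r + 1 := by
    have h2 : (k-1) + m = n := by omega
    have h1 : p * (k-1) + p * m = p * n := by rw [← Nat.mul_add, h2]
    omega
  rw [hrhs] at key
  rw [show n - k + 2 = m + 1 from by omega] at *
  rw [← key]
  apply Finset.sum_congr rfl
  intro j hj
  rw [Finset.mem_range] at hj
  have hjm : j ≤ m := by omega
  have harg1 : p * (n - j) + r = p * (k-1) + r + p * (m - j) := by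
    have h2 : (k-1) + (m-j) = n - j := by omega
    have h1 : p * (k-1) + p * (m-j) = p * (n - j) := by rw [← Nat.mul_add, h2]
    omega
  have harg2 : n + 1 - j - k = m - j := by omega
  rw [harg1, harg2]
  congr 1
  cases j with
  | zero => norm_num [rotheP]
  | succ j' =>
    simp only [rotheP]
    have h3 : 1 + p * (j' + 1) - 1 = p * (j' + 1) := by omega
    rw [h3]
    have h4 := Nat.add_one_mul_choose_eq (p * (j' + 1)) j'
    have h5 : ((Nat.succ (p * (j'+1)) * Nat.choose (p * (j'+1)) j' : ℕ) : ℚ)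
        = ((Nat.choose (p * (j'+1) + 1) (j'+1) * (j'+1) : ℕ) : ℚ) := by exact_mod_cast congrArg Nat.cast h4
    push_cast at h5
    have d1 : ((p : ℚ) * (j'+1) + 1) ≠ 0 := by positivity
    have d2 : ((j' : ℚ) + 1) ≠ 0 := by positivity
    field_simp
    push_cast
    linear_combination -h5
end

section
/- For all natural numbers x ≥ 1, y, p and n, the following identity holds in ℚ: Σ_{i=0}^{n} (x/(x+p·i)) · C(x+p·i, i) · C(y+p·(n−i), n−i) = C(x+y+p·n, n). -/
/-- Corrected coefficient: `x/(x+pi)·C(x+pi,i)`, with value `1` at `i = 0`. -/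
def Aq (x p i : ℕ) : ℚ :=
  if i = 0 then 1
  else (x : ℚ) / ((x + p * i : ℕ) : ℚ) * (Nat.choose (x + p * i) i : ℚ)

lemma Aq_rec (x p n : ℕ) :
    Aq (x + 1) p (n + 1) = Aq x p (n + 1) + Aq (x + p) p n := by
  cases n with
  | zero =>
    simp only [Aq, if_neg (Nat.succ_ne_zero 0), if_pos rfl]
    rcases Nat.eq_zero_or_pos (x + p) with h | h
    · obtain ⟨hx, hp⟩ := Nat.add_eq_zero.mp h
      subst hx; subst hp; norm_num
    · have hxp : ((x + p * 1 : ℕ) : ℚ) ≠ 0 := by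
        have : (0:ℕ) < x + p * 1 := by omega
        exact_mod_cast this.ne'
      have hxp1 : ((x + 1 + p * 1 : ℕ) : ℚ) ≠ 0 := by
        have : (0:ℕ) < x + 1 + p * 1 := by omega
        exact_mod_cast this.ne'
      have hxp' : (x : ℚ) + p ≠ 0 := by
        have h2 : ((x + p : ℕ) : ℚ) ≠ 0 := by exact_mod_cast h.ne'
        push_cast at h2; exact h2
      rw [Nat.choose_one_right, Nat.choose_one_right]
      push_cast
      field_simp
  | succ n =>
    have hnn : n + 1 + 1 = n + 2 := rfl
    simp only [Aq, if_neg (Nat.succ_ne_zero _), hnn]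
    set a := x + p * (n + 2) with ha
    rcases Nat.eq_zero_or_pos a with h | h
    · obtain ⟨hx, hp⟩ := Nat.add_eq_zero.mp h
      have hp' : p = 0 := by
        rcases Nat.mul_eq_zero.mp hp with h' | h'
        · exact h'
        · omega
      subst hx; subst hp'
      simp [Nat.choose_eq_zero_of_lt]
    · have key : ((x : ℚ) + 1) * a * (Nat.choose (a + 1) (n + 2) : ℚ)
          = (x : ℚ) * (a + 1) * (Nat.choose a (n + 2) : ℚ)
            + ((x : ℚ) + p) * (a + 1) * (Nat.choose a (n + 1) : ℚ) := by
        have h1 : (Nat.choose (a + 1) (n + 2) : ℚ)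
            = (Nat.choose a (n + 1) : ℚ) + (Nat.choose a (n + 2) : ℚ) := by
          rw [Nat.choose_succ_succ]; push_cast; ring
        have h2 : ((a : ℚ) + 1) * (Nat.choose a (n + 1) : ℚ)
            = ((n : ℚ) + 2) * (Nat.choose (a + 1) (n + 2) : ℚ) := by
          have h := Nat.add_one_mul_choose_eq a (n + 1)
          have h' := congrArg (fun t : ℕ => (t : ℚ)) h
          push_cast at h'
          linarith [h']
        have ha' : (a : ℚ) = x + p * (n + 2) := by rw [ha]; push_cast; ring
        linear_combination ((x : ℚ) * ((a : ℚ) + 1)) * h1 - (p : ℚ) * h2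
          + (Nat.choose (a + 1) (n + 2) : ℚ) * ha'
      have hA : ((a : ℚ)) ≠ 0 := by exact_mod_cast h.ne'
      have hA1 : ((a : ℚ)) + 1 ≠ 0 := by positivity
      have e1 : (x + 1 + p * (n + 2) : ℕ) = a + 1 := by rw [ha]; ring
      have e3 : (x + p + p * (n + 1) : ℕ) = a := by rw [ha]; ring
      rw [e1, e3]
      push_cast
      field_simp
      linear_combination key

lemma key_sum (p : ℕ) : ∀ n, ∀ x y : ℕ,
    ∑ i ∈ Finset.range (n + 1),
        Aq x p i * ((y + p * (n - i)).choose (n - i) : ℚ)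
      = ((x + y + p * n).choose n : ℚ) := by
  intro n
  induction n with
  | zero => intro x y; simp [Aq]
  | succ n ih =>
    intro x
    induction x with
    | zero =>
      intro y
      rw [Finset.sum_eq_single 0]
      · simp [Aq]
      · intro i _ hi
        simp [Aq, hi]
      · intro h; simp at h
    | succ x ihx =>
      intro y
      rw [Finset.sum_range_succ']
      have step : ∀ i ∈ Finset.range (n + 1),
          Aq (x + 1) p (i + 1) * ((y + p * (n + 1 - (i + 1))).choose (n + 1 - (i + 1)) : ℚ)
            = Aq x p (i + 1) * ((y + p * (n + 1 - (i + 1))).choose (n + 1 - (i + 1)) : ℚ)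
              + Aq (x + p) p i * ((y + p * (n - i)).choose (n - i) : ℚ) := by
        intro i _
        rw [Aq_rec, add_mul, Nat.succ_sub_succ]
      rw [Finset.sum_congr rfl step, Finset.sum_add_distrib, ih (x + p) y]
      have back : (∑ i ∈ Finset.range (n + 1),
            Aq x p (i + 1) * ((y + p * (n + 1 - (i + 1))).choose (n + 1 - (i + 1)) : ℚ))
            + Aq (x + 1) p 0 * ((y + p * (n + 1 - 0)).choose (n + 1 - 0) : ℚ)
          = ∑ i ∈ Finset.range (n + 1 + 1),
              Aq x p i * ((y + p * (n + 1 - i)).choose (n + 1 - i) : ℚ) := by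
        conv_rhs => rw [Finset.sum_range_succ']
        have h0 : Aq (x + 1) p 0 = Aq x p 0 := by simp [Aq]
        rw [h0]
      rw [add_right_comm, back, ihx y]
      have e : x + 1 + y + p * (n + 1) = (x + y + p * (n + 1)) + 1 := by ring
      have hM : x + p + y + p * n = x + y + p * (n + 1) := by ring
      rw [hM, e, Nat.choose_succ_succ']
      push_cast
      ring

/-- Formula (5.62) of Graham–Knuth–Patashnik (a Rothe–Hagen/Gould-type
convolution): `Σ_{i=0}^{n} (x/(x+pi))·C(x+pi, i)·C(y+p(n-i), n-i) = C(x+y+pn, n)`. -/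
theorem gkp_562 (x y p n : ℕ) (hx : 1 ≤ x) :
    ∑ i ∈ Finset.range (n + 1),
        ((x : ℚ) / ((x + p * i : ℕ) : ℚ)) * (Nat.choose (x + p * i) i : ℚ) *
          (Nat.choose (y + p * (n - i)) (n - i) : ℚ) =
      (Nat.choose (x + y + p * n) n : ℚ) := by
  rw [← key_sum p n x y]
  refine Finset.sum_congr rfl fun i _ => ?_
  rcases Nat.eq_zero_or_pos i with hi | hi
  · subst hi
    have hx' : ((x + p * 0 : ℕ) : ℚ) = (x : ℚ) := by push_cast; ring
    have hx0 : (x : ℚ) ≠ 0 := by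
      have : (0:ℕ) < x := hx
      exact_mod_cast this.ne'
    rw [hx', div_self hx0]
    simp [Aq]
  · simp only [Aq, if_neg hi.ne']
end

section
/- Let C ∈ ℚ⟦X⟧ be the Catalan generating function, i.e., the power series satisfying C = 1 + X·C². Then for every integer r ≥ 0 and all integers n, k ≥ 0, the n-th coefficient of C^{r+1} · (2 − C)⁻¹ · (X·C²)^k equals the binomial coefficient C(2n+r, n+r+k). In other words, the half Riordan array with entries d̃_{n,k} = C(2n+r, n+r+k) extracted from the Pascal matrix is the Riordan array (B·C^r, X·C²), where B = C/(2−C) = 1/√(1−4X) is the generating function of the central binomial coefficients. -/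
open PowerSeries

lemma half_pascal_key (Cat : ℚ⟦X⟧) (hCat : Cat = 1 + X * Cat ^ 2) :
    ∀ m s : ℕ, coeff m (Cat ^ (s + 1) * (2 - Cat)⁻¹) =
      (Nat.choose (2 * m + s) (m + s) : ℚ) := by
  have h0 : constantCoeff Cat = 1 := by
    conv_lhs => rw [hCat]
    simp
  have h2 : constantCoeff (2 - Cat) = 1 := by
    rw [map_sub, h0, map_ofNat]
    norm_num
  have h2' : constantCoeff (2 - Cat) ≠ 0 := by rw [h2]; norm_num
  have hinv : (2 - Cat) * (2 - Cat)⁻¹ = 1 := PowerSeries.mul_inv_cancel _ h2'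
  have hG0 : Cat * (2 - Cat)⁻¹ =
      1 + X * (Cat ^ 2 * (2 - Cat)⁻¹) + X * (Cat ^ 2 * (2 - Cat)⁻¹) := by
    linear_combination hinv + 2 * (2 - Cat)⁻¹ * hCat
  have hrec : ∀ s : ℕ, Cat ^ (s + 2) * (2 - Cat)⁻¹ =
      Cat ^ (s + 1) * (2 - Cat)⁻¹ + X * (Cat ^ (s + 3) * (2 - Cat)⁻¹) := by
    intro s
    have hp : Cat ^ (s + 2) = Cat ^ (s + 1) + X * Cat ^ (s + 3) := by
      calc Cat ^ (s + 2) = Cat * Cat ^ (s + 1) := by ring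
        _ = (1 + X * Cat ^ 2) * Cat ^ (s + 1) := by rw [← hCat]
        _ = Cat ^ (s + 1) + X * Cat ^ (s + 3) := by ring
    rw [hp]; ring
  intro m
  induction m with
  | zero =>
    intro s
    simp only [coeff_zero_eq_constantCoeff, map_mul, map_pow, h0,
      PowerSeries.constantCoeff_inv, h2, one_pow, inv_one, mul_one]
    simp [Nat.choose_self]
  | succ m ih =>
    intro s
    induction s with
    | zero =>
      have : coeff (m + 1) (Cat ^ 1 * (2 - Cat)⁻¹) =
          (Nat.choose (2 * m + 1) (m + 1) : ℚ) + (Nat.choose (2 * m + 1) (m + 1) : ℚ) := by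
        rw [pow_one, hG0, map_add, map_add, coeff_succ_X_mul]
        have h1 : coeff m (Cat ^ (1 + 1) * (2 - Cat)⁻¹) =
            (Nat.choose (2 * m + 1) (m + 1) : ℚ) := ih 1
        norm_num at h1 ⊢
        rw [h1]
      rw [this]
      have hnat : Nat.choose (2 * (m + 1) + 0) (m + 1 + 0) =
          Nat.choose (2 * m + 1) (m + 1) + Nat.choose (2 * m + 1) (m + 1) := by
        have e1 : 2 * (m + 1) + 0 = (2 * m + 1) + 1 := by omega
        rw [e1, Nat.add_zero, Nat.choose_succ_succ' (2 * m + 1) m]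
        have : Nat.choose (2 * m + 1) m = Nat.choose (2 * m + 1) (m + 1) := by
          have := Nat.choose_symm (n := 2 * m + 1) (k := m + 1) (by omega)
          have e2 : 2 * m + 1 - (m + 1) = m := by omega
          rw [e2] at this
          exact this
        rw [this]
      rw [hnat]
      push_cast
      ring
    | succ s ihs =>
      rw [hrec s, map_add, coeff_succ_X_mul, ihs, ih (s + 2)]
      have hnat : Nat.choose (2 * (m + 1) + (s + 1)) (m + 1 + (s + 1)) =
          Nat.choose (2 * (m + 1) + s) (m + 1 + s) + Nat.choose (2 * m + (s + 2)) (m + (s + 2)) := by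
        have e1 : 2 * (m + 1) + (s + 1) = (2 * m + s + 2) + 1 := by omega
        have e2 : m + 1 + (s + 1) = (m + s + 1) + 1 := by omega
        rw [e1, e2, Nat.choose_succ_succ' (2 * m + s + 2) (m + s + 1)]
        congr 2 <;> omega
      rw [hnat]
      push_cast
      ring

/-- The half Riordan array with entries `C(2n+r, n+r+k)` extracted from the
Pascal matrix is the Riordan array `(B·C^r, X·C²)`, where `C` is the Catalan
generating function and `B = C/(2-C)` generates the central binomial
coefficients. -/
theorem half_pascal_riordan (Cat : ℚ⟦X⟧) (hCat : Cat = 1 + X * Cat ^ 2) :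
    ∀ r n k : ℕ,
      coeff n (Cat ^ (r + 1) * (2 - Cat)⁻¹ * (X * Cat ^ 2) ^ k) =
        (Nat.choose (2 * n + r) (n + r + k) : ℚ) := by
  intro r n k
  have hre : Cat ^ (r + 1) * (2 - Cat)⁻¹ * (X * Cat ^ 2) ^ k =
      X ^ k * (Cat ^ (r + 2 * k + 1) * (2 - Cat)⁻¹) := by
    rw [mul_pow]
    ring
  rw [hre]
  rcases le_or_gt k n with hk | hk
  · obtain ⟨d, rfl⟩ : ∃ d, n = d + k := ⟨n - k, by omega⟩
    rw [coeff_X_pow_mul, half_pascal_key Cat hCat d (r + 2 * k)]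
    congr 2 <;> omega
  · have hdvd : (X : ℚ⟦X⟧) ^ k ∣ X ^ k * (Cat ^ (r + 2 * k + 1) * (2 - Cat)⁻¹) :=
      Dvd.intro _ rfl
    rw [PowerSeries.X_pow_dvd_iff.mp hdvd n hk]
    rw [Nat.choose_eq_zero_of_lt (by omega)]
    norm_num
end
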